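/- arXiv:gr-qc/9812080 — 6 statements merged into one kernel-verified Lean document; each statement's English description precedes it below -/
import Mathlib

section
/- Let m ≥ 1, let U₁, …, U_m be real orthogonal n×n matrices, and let V₁, …, V_m be skew-symmetric real n×n matrices. Define the positively oriented quantities U⁺ = U₁·U₂·⋯·U_m and W⁺ = (1/m)·Σ_{i=1}^{m} P_i·V_i·P_iᵀ, where P₁ = 1 and P_i = U₁·⋯·U_{i−1} for i ≥ 2; and the negatively oriented quantities U⁻ = (U₁·⋯·U_m)ᵀ and W⁻ = (1/m)·( Q₁·V₁ᵀ·Q₁ᵀ + Σ_{i=2}^{m} Q_i·V_{m−i+2}ᵀ·Q_iᵀ ), where Q₁ = 1 and Q_i = U_mᵀ·U_{m−1}ᵀ·⋯·U_{m−i+2}ᵀ for i ≥ 2. Then Tr(U⁺·W⁺) = Tr(U⁻·W⁻); that is, the plaquette action −(1/2)Tr(U^{h}_{αα}·W^{h}(α)) is independent of the chosen orientation of the boundary of the dual Voronoï plaquette. -/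
/-!
Split the holonomy at the `i`-th vertex of the loop as `U⁺ = P D`, with `P` the transport from the
base frame to that vertex and `D` the rest of the loop. By cyclicity of the trace and orthogonality
of `P` and `D`, the `i`-th term of either orientation equals `Tr (V D P)`. The reversed loop visits
the vertices in the order `0, m-1, …, 1`, i.e. its `k`-th term belongs to the vertex `-k` of
`ℤ/m`, so reindexing by negation in `Fin m` matches the two sums term by term.
-/

open Matrix

namespace Matrix

variable {ι : Type*} [Fintype ι] [DecidableEq ι]

theorem trace_conj_of_mem_orthogonalGroup {P : Matrix ι ι ℝ}
    (hP : P ∈ orthogonalGroup ι ℝ) (X : Matrix ι ι ℝ) : trace (P * X * Pᵀ) = trace X := by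
  rw [trace_mul_cycle, (mem_orthogonalGroup_iff' ι ℝ).1 hP, Matrix.one_mul]

theorem trace_transpose_conj_of_mem_orthogonalGroup {P : Matrix ι ι ℝ}
    (hP : P ∈ orthogonalGroup ι ℝ) (X : Matrix ι ι ℝ) : trace (Pᵀ * X * P) = trace X := by
  rw [trace_mul_cycle, (mem_orthogonalGroup_iff ι ℝ).1 hP, Matrix.one_mul]

theorem trace_mul_conj_eq_trace_transpose_mul_conj {P D : Matrix ι ι ℝ}
    (hP : P ∈ orthogonalGroup ι ℝ) (hD : D ∈ orthogonalGroup ι ℝ) (W : Matrix ι ι ℝ) :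
    trace ((P * D) * (P * W * Pᵀ)) = trace ((P * D)ᵀ * (Dᵀ * Wᵀ * D)) :=
  calc trace ((P * D) * (P * W * Pᵀ))
      = trace (P * (D * P * W) * Pᵀ) := by simp only [Matrix.mul_assoc]
    _ = trace (W * (D * P)) := by
      rw [trace_conj_of_mem_orthogonalGroup hP, trace_mul_comm]
    _ = trace ((W * (D * P))ᵀ) := (trace_transpose _).symm
    _ = trace (Dᵀ * (Pᵀ * Dᵀ * Wᵀ) * D) := by
      rw [trace_transpose_conj_of_mem_orthogonalGroup hD]
      simp only [transpose_mul, Matrix.mul_assoc]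
    _ = trace ((P * D)ᵀ * (Dᵀ * Wᵀ * D)) := by simp only [transpose_mul, Matrix.mul_assoc]

end Matrix

theorem List.trace_prod_mul_conj_take_eq {ι : Type*} [Fintype ι] [DecidableEq ι]
    {l : List (Matrix ι ι ℝ)} (hl : ∀ B ∈ l, B ∈ orthogonalGroup ι ℝ) (j : ℕ)
    (W : Matrix ι ι ℝ) :
    trace (l.prod * ((l.take j).prod * W * (l.take j).prodᵀ)) =
      trace (l.prodᵀ * ((l.drop j).prodᵀ * Wᵀ * (l.drop j).prod)) := by
  rw [← l.prod_take_mul_prod_drop j]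
  exact trace_mul_conj_eq_trace_transpose_mul_conj
    (Submonoid.list_prod_mem _ fun B hB => hl B (List.take_subset _ _ hB))
    (Submonoid.list_prod_mem _ fun B hB => hl B (List.drop_subset _ _ hB)) W

/-- **Orientation independence of the plaquette action.**
Let `U 0, …, U (m-1)` be orthogonal matrices (the connection matrices along one
orientation of the closed dual Voronoï loop around a hinge) and
`V 0, …, V (m-1)` skew-symmetric matrices (the oriented hinge bivectors in the
frames of the simplices of the loop).  With the positively oriented holonomy
`U⁺ = U 0 ⋯ U (m-1)`, the averaged transported bivector
`W⁺ = (1/m) Σᵢ Pᵢ·Vᵢ·Pᵢᵀ` where `Pᵢ = U 0 ⋯ U (i-1)` (`P₀ = 1`), and the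
negatively oriented quantities `U⁻ = (U 0 ⋯ U (m-1))ᵀ`,
`W⁻ = (1/m)(Q₀·V₀ᵀ·Q₀ᵀ + Σ_{k≥1} Q_k·V_{m-k}ᵀ·Q_kᵀ)` where `Q₀ = 1` and
`Q_k = (U (m-k) ⋯ U (m-1))ᵀ`, one has `Tr(U⁺·W⁺) = Tr(U⁻·W⁻)` : the plaquette
action is independent of the chosen orientation of the plaquette boundary. -/
theorem plaquette_action_orientation_independent
    (n m : ℕ) (hm : 1 ≤ m)
    (U V : Fin m → Matrix (Fin n) (Fin n) ℝ)
    (hU : ∀ i, U i * (U i)ᵀ = 1) :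
    (((List.ofFn U).prod) *
        ((1 / (m : ℝ)) •
          ∑ i : Fin m,
            ((List.ofFn U).take i.val).prod * V i *
              (((List.ofFn U).take i.val).prod)ᵀ)).trace
      =
    ((((List.ofFn U).prod)ᵀ) *
        ((1 / (m : ℝ)) •
          ∑ k : Fin m,
            (((List.ofFn U).drop (m - k.val)).prod)ᵀ *
              (V ⟨(m - k.val) % m, Nat.mod_lt _ (by omega)⟩)ᵀ *
              (((List.ofFn U).drop (m - k.val)).prod))).trace := by
  have : NeZero m := ⟨by omega⟩
  have hl : ∀ B ∈ List.ofFn U, B ∈ orthogonalGroup (Fin n) ℝ := by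
    simpa [List.mem_ofFn, mem_orthogonalGroup_iff] using hU
  simp only [← Fin.neg_def, mul_smul_comm, trace_smul, Matrix.mul_sum, trace_sum]
  congr 1
  refine Fintype.sum_equiv (Equiv.neg (Fin m)) _ _ fun i => ?_
  simp only [Equiv.neg_apply, neg_neg]
  rcases eq_or_ne i 0 with rfl | hi
  · simp only [neg_zero, Fin.val_zero, Nat.sub_zero, List.take_zero,
      List.drop_eq_nil_of_le (List.length_ofFn (f := U)).le, List.prod_nil, transpose_one,
      Matrix.one_mul, Matrix.mul_one]
    rw [← transpose_mul, trace_transpose, trace_mul_comm]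
  · simp only [Fin.val_neg, if_neg hi, Nat.sub_sub_self i.isLt.le]
    exact List.trace_prod_mul_conj_take_eq hl i (V i)
end

section
/- For all integers α ≥ 2 and n ≥ 2, the quantity r_α(n) satisfies the recursion r_α(n) = Σ_{γ=0}^{α−1} (1/γ!) · Σ* ∏_{i=1}^{γ} r_α(n_i), where Σ* is the sum over all ordered tuples (n₁, …, n_γ) of integers with each n_i ≥ 2 and n₁ + ⋯ + n_γ = n + γ − 2 (for γ = 0 the term is 1 if n = 2 and 0 otherwise). -/
/-!
Let `φ = ∑_{m<α} X^m/m!`. By Lagrange inversion the power series `F` with `F = X φ(F)` has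
`(j+1) [X^{j+1}] F = [X^j] φ^{j+1}`, which is the closed formula: `r_α(n) = [X^{n-1}] F`.
The recursion is then the functional equation `F = X φ(F)` read off coefficient by coefficient,
the coefficients of `F^γ` being sums over compositions.

`F` is the compositional inverse of `G = X/φ`. Lagrange inversion is the residue computation
`res (F(G) G' / G^{j+2}) = res (F / X^{j+2})`; with power series only, the residue of
`H(G) G' / G^{j+2}` is `[X^{j+1}] (H(G) · φ^j (φ - X φ'))`, and the change of variables reduces to
`[X^{j+1}] (G^k φ^j (φ - X φ')) = δ_{k,j+1}`, itself the vanishing of the residue of a derivative.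
-/

open Finset

/-- The number `r_α(n)` of combinatorially inequivalent rooted tree graphs with
`n` vertices, root of coordination number 1, and all coordination numbers at
most `α`, given by the paper's closed (Cayley-type) formula
`r_α(n) = (1/(n−1)) Σ_{m₁+⋯+m_{n−1}=n−2, 0 ≤ mᵢ ≤ α−1} ∏ᵢ 1/(mᵢ!)`. -/
noncomputable def rootedTrees (α n : ℕ) : ℝ :=
  (1 / (n - 1 : ℝ)) *
    ∑ f ∈ (Fintype.piFinset fun _ : Fin (n - 1) => Finset.range α) |>.filter
        (fun f => ∑ i, f i = n - 2),
      ∏ i, (1 : ℝ) / (Nat.factorial (f i))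

namespace PowerSeries

section CommRing

variable {R : Type*} [CommRing R]

theorem coeff_X_mul_derivative (f : R⟦X⟧) (i : ℕ) :
    coeff i (X * d⁄dX R f) = i * coeff i f := by
  cases i with
  | zero => simp
  | succ i => rw [coeff_succ_X_mul, coeff_derivative, mul_comm]; push_cast; rfl

theorem coeff_pow_mul_sub_X_mul_derivative (φ : R⟦X⟧) (j i : ℕ) :
    (j + 1 : R) * coeff i (φ ^ j * (φ - X * d⁄dX R φ))
      = (j + 1 - i : R) * coeff i (φ ^ (j + 1)) := by
  have h : (j + 1 : R) • (φ ^ j * (φ - X * d⁄dX R φ))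
      = (j + 1 : R) • φ ^ (j + 1) - X * d⁄dX R (φ ^ (j + 1)) := by
    rw [derivative_pow, smul_eq_C_mul, smul_eq_C_mul]; push_cast; simp only [map_add, map_natCast, map_one]; ring
  have := congrArg (coeff i) h
  rw [coeff_smul, map_sub, coeff_smul, coeff_X_mul_derivative, smul_eq_mul, smul_eq_mul] at this
  rw [this]; ring

theorem coeff_pow_eq_sum_piFinset (g : R⟦X⟧) (s : Finset ℕ) (k N : ℕ)
    (hs : ∀ m ≤ N, m ∉ s → coeff m g = 0) :
    coeff N (g ^ k) = ∑ t ∈ (Fintype.piFinset fun _ : Fin k => s) with ∑ i, t i = N,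
      ∏ i, coeff (t i) g := by
  set gs := ∑ m ∈ s, monomial m (coeff m g)
  have hdvd : X ^ (N + 1) ∣ g - gs := by
    refine X_pow_dvd_iff.mpr fun m hm => ?_
    by_cases hm' : m ∈ s <;> simp [gs, coeff_monomial, hm', hs m (by omega)]
  obtain ⟨Q, hQ⟩ := hdvd.trans (sub_dvd_pow_sub_pow g gs k)
  have hgs : gs ^ k = ∑ t ∈ Fintype.piFinset fun _ : Fin k => s,
      monomial (∑ i, t i) (∏ i, coeff (t i) g) := by
    rw [← Fin.prod_const, prod_univ_sum]
    simp_rw [prod_monomial]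
  rw [← sub_add_cancel (g ^ k) (gs ^ k), hQ, map_add, coeff_X_pow_mul', if_neg (by omega),
    zero_add, hgs, map_sum, sum_filter]
  simp_rw [coeff_monomial, eq_comm]

theorem coeff_pow_eq_sum_piFinset_Icc {F : R⟦X⟧} {r : ℕ → R} (hF : constantCoeff F = 0)
    (hr : ∀ m, 2 ≤ m → r m = coeff m (X * F)) {j γ M : ℕ} (hM : j + γ ≤ M) :
    coeff j (F ^ γ) = ∑ t ∈ (Fintype.piFinset fun _ : Fin γ => Icc 2 M) with ∑ i, t i = j + γ,
      ∏ i, r (t i) := by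
  have hsupp : ∀ m ≤ j + γ, m ∉ Icc 2 M → coeff m (X * F) = 0 := by
    intro m hm hmM
    obtain rfl | rfl : m = 0 ∨ m = 1 := by simp only [mem_Icc] at hmM; omega
    · simp
    · simp [hF]
  rw [← coeff_X_pow_mul, ← mul_pow, coeff_pow_eq_sum_piFinset _ _ _ _ hsupp]
  refine sum_congr rfl fun t ht => prod_congr rfl fun i _ => (hr _ ?_).symm
  simp only [mem_filter, Fintype.mem_piFinset, mem_Icc] at ht
  exact (ht.1 i).1

end CommRing

section Field

variable {K : Type*} [Field K] {φ : K⟦X⟧}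

theorem inv_pow_mul_pow_of_le (hφ : constantCoeff φ ≠ 0) {k j : ℕ} (hkj : k ≤ j) :
    φ⁻¹ ^ k * φ ^ j = φ ^ (j - k) := by
  rw [← Nat.add_sub_cancel' hkj, pow_add, ← mul_assoc, ← mul_pow,
    PowerSeries.inv_mul_cancel _ hφ, one_pow, one_mul, Nat.add_sub_cancel_left]

/-- `X^{j+2} G' / G^{j+2}` for `G = X/φ`. -/
noncomputable def lagrangeKernel (φ : K⟦X⟧) (j : ℕ) : K⟦X⟧ := φ ^ j * (φ - X * d⁄dX K φ)

theorem coeff_X_mul_inv_pow_mul_lagrangeKernel [CharZero K] (hφ : constantCoeff φ ≠ 0)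
    (j k : ℕ) :
    coeff (j + 1) ((X * φ⁻¹) ^ k * lagrangeKernel φ j) = if k = j + 1 then 1 else 0 := by
  rw [mul_pow, mul_assoc, coeff_X_pow_mul', lagrangeKernel]
  obtain hkj | rfl | hjk := lt_trichotomy k (j + 1)
  · rw [if_pos hkj.le, if_neg hkj.ne, ← mul_assoc, inv_pow_mul_pow_of_le hφ (by omega)]
    obtain ⟨i, rfl⟩ : ∃ i, j = k + i := ⟨j - k, by omega⟩
    rw [show k + i + 1 - k = i + 1 by omega, Nat.add_sub_cancel_left]
    have h := coeff_pow_mul_sub_X_mul_derivative φ i (i + 1)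
    rw [Nat.cast_add_one, sub_self, zero_mul] at h
    exact (mul_eq_zero.mp h).resolve_left (by norm_cast)
  · rw [if_pos le_rfl, if_pos rfl, Nat.sub_self, coeff_zero_eq_constantCoeff, pow_succ',
      mul_assoc, ← mul_assoc (φ⁻¹ ^ j), inv_pow_mul_pow_of_le hφ le_rfl, Nat.sub_self, pow_zero,
      one_mul]
    simp [hφ]
  · rw [if_neg (by omega), if_neg hjk.ne']

theorem coeff_subst_X_mul_inv_mul_lagrangeKernel [CharZero K] (hφ : constantCoeff φ ≠ 0)
    (H : K⟦X⟧) (j : ℕ) :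
    coeff (j + 1) (H.subst (X * φ⁻¹) * lagrangeKernel φ j) = coeff (j + 1) H := by
  have hG : HasSubst (X * φ⁻¹) := HasSubst.of_constantCoeff_zero' (by simp)
  obtain ⟨Q, hQ⟩ : ∃ Q, H = X ^ (j + 2) * Q + (trunc (j + 2) H : K⟦X⟧) :=
    ⟨_, eq_X_pow_mul_shift_add_trunc (j + 2) H⟩
  have htail :
      coeff (j + 1) ((X * φ⁻¹) ^ (j + 2) * Q.subst (X * φ⁻¹) * lagrangeKernel φ j) = 0 := by
    rw [mul_pow, mul_assoc, mul_assoc, coeff_X_pow_mul', if_neg (by omega)]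
  have hhead : (trunc (j + 2) H : K⟦X⟧).subst (X * φ⁻¹)
      = ∑ k ∈ range (j + 2), C (coeff k H) * (X * φ⁻¹) ^ k := by
    rw [subst_coe hG, Polynomial.aeval_def, eval₂_trunc_eq_sum_range]; rfl
  nth_rw 1 [hQ]
  rw [subst_add hG, subst_mul hG, subst_pow hG, subst_X hG, hhead, add_mul, map_add,
    htail, zero_add, sum_mul, map_sum]
  simp_rw [mul_assoc, coeff_C_mul, coeff_X_mul_inv_pow_mul_lagrangeKernel hφ, mul_ite, mul_one,
    mul_zero]
  rw [sum_ite_eq' (range (j + 2)), if_pos (mem_range.mpr (by omega))]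

theorem lagrange_inversion [CharZero K] (hφ : constantCoeff φ ≠ 0) {F : K⟦X⟧}
    (hF : F.subst (X * φ⁻¹) = X) (j : ℕ) :
    (j + 1 : K) * coeff (j + 1) F = coeff j (φ ^ (j + 1)) := by
  rw [← coeff_subst_X_mul_inv_mul_lagrangeKernel hφ F j, hF, coeff_succ_X_mul, lagrangeKernel,
    coeff_pow_mul_sub_X_mul_derivative]
  ring

theorem eq_X_mul_subst_of_subst_eq_X (hφ : constantCoeff φ ≠ 0) {F : K⟦X⟧} (hF : HasSubst F)
    (h : (X * φ⁻¹).subst F = X) : F = X * φ.subst F := by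
  have hinv : φ.subst F * φ⁻¹.subst F = 1 := by
    rw [← subst_mul hF, PowerSeries.mul_inv_cancel _ hφ, ← coe_substAlgHom hF, map_one]
  rw [← h, subst_mul hF, subst_X hF, mul_right_comm, mul_assoc, hinv, mul_one]

theorem exists_eq_X_mul_subst_and_lagrange_inversion [CharZero K]
    (hφ : constantCoeff φ ≠ 0) :
    ∃ F : K⟦X⟧, constantCoeff F = 0 ∧ F = X * φ.subst F ∧
      ∀ j : ℕ, (j + 1 : K) * coeff (j + 1) F = coeff j (φ ^ (j + 1)) := by
  have hG : constantCoeff (X * φ⁻¹) = 0 := by simp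
  have hunit : IsUnit (coeff 1 (X * φ⁻¹)) := by
    rw [coeff_succ_X_mul, coeff_zero_eq_constantCoeff, constantCoeff_inv]
    exact (inv_ne_zero hφ).isUnit
  have hF : HasSubst ((X * φ⁻¹).substInvOfIsUnit hunit) := HasSubst.substInvOfIsUnit _ _
  have hFG : ((X * φ⁻¹).substInvOfIsUnit hunit).subst (X * φ⁻¹) = X :=
    subst_substInvOfIsUnit_left _ hG hunit
  have hGF : (X * φ⁻¹).subst ((X * φ⁻¹).substInvOfIsUnit hunit) = X :=
    subst_substInvOfIsUnit_right _ hG hunit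
  exact ⟨_, constantCoeff_substInvOfIsUnit _ _, eq_X_mul_subst_of_subst_eq_X hφ hF hGF,
    lagrange_inversion hφ hFG⟩

end Field

end PowerSeries

open PowerSeries
open scoped Nat

noncomputable def truncatedExp (α : ℕ) : ℝ⟦X⟧ := mk fun m => if m < α then 1 / (m ! : ℝ) else 0

theorem constantCoeff_truncatedExp {α : ℕ} (hα : 0 < α) :
    constantCoeff (truncatedExp α) = 1 := by
  simp [truncatedExp, hα]

theorem coeff_subst_truncatedExp {F : ℝ⟦X⟧} (hF : HasSubst F) (α N : ℕ) :
    coeff N ((truncatedExp α).subst F) = ∑ γ ∈ range α, 1 / (γ ! : ℝ) * coeff N (F ^ γ) := by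
  rw [coeff_subst' hF, finsum_eq_sum_of_support_subset _ (s := range α)]
  · refine sum_congr rfl fun γ hγ => ?_
    simp [truncatedExp, mem_range.mp hγ]
  · intro γ hγ
    by_contra h
    simp_all [truncatedExp]

theorem rootedTrees_eq_coeff_truncatedExp_pow (α j : ℕ) :
    rootedTrees α (j + 2) = 1 / (j + 1 : ℝ) * coeff j (truncatedExp α ^ (j + 1)) := by
  have hsupp : ∀ m ≤ j, m ∉ range α → coeff m (truncatedExp α) = 0 := by
    intro m _ hm
    simp_all [truncatedExp]
  rw [rootedTrees, coeff_pow_eq_sum_piFinset _ _ _ _ hsupp]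
  push_cast
  congr 1
  · ring
  refine sum_congr rfl fun t ht => prod_congr rfl fun i _ => ?_
  simp only [mem_filter, Fintype.mem_piFinset, mem_range] at ht
  simp [truncatedExp, ht.1 i]

/-- **Recursion relation for rooted branched polymers.**
For `α ≥ 2` and `n ≥ 2`,
`r_α(n) = Σ_{γ=0}^{α−1} (1/γ!) Σ_{n₁,…,n_γ ≥ 2, Σ nᵢ = n+γ−2} ∏ᵢ r_α(nᵢ)`
(for `γ = 0` the inner term is `1` if `n = 2` and `0` otherwise). -/
theorem rootedTrees_recursion (α n : ℕ) (hα : 2 ≤ α) (hn : 2 ≤ n) :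
    rootedTrees α n
      = ∑ γ ∈ Finset.range α, (1 / (Nat.factorial γ : ℝ)) *
          ∑ t ∈ (Fintype.piFinset fun _ : Fin γ => Finset.Icc 2 (n + γ)) |>.filter
              (fun t => ∑ i, t i = n + γ - 2),
            ∏ i, rootedTrees α (t i) := by
  have hφ : constantCoeff (truncatedExp α) ≠ 0 := by
    rw [constantCoeff_truncatedExp (by omega)]; exact one_ne_zero
  obtain ⟨F, hF0, hFφ, hlag⟩ := exists_eq_X_mul_subst_and_lagrange_inversion hφ
  have hr : ∀ m, 2 ≤ m → rootedTrees α m = coeff m (X * F) := by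
    intro m hm
    obtain ⟨j, rfl⟩ : ∃ j, m = j + 2 := ⟨m - 2, by omega⟩
    rw [rootedTrees_eq_coeff_truncatedExp_pow, ← hlag, coeff_succ_X_mul, ← mul_assoc,
      one_div_mul_cancel (by positivity), one_mul]
  obtain ⟨j, rfl⟩ : ∃ j, n = j + 2 := ⟨n - 2, by omega⟩
  rw [hr _ hn, hFφ, ← mul_assoc, ← pow_two, coeff_X_pow_mul,
    coeff_subst_truncatedExp (HasSubst.of_constantCoeff_zero' hF0)]
  refine sum_congr rfl fun γ _ => congrArg _ ?_
  rw [show j + 2 + γ - 2 = j + γ by omega]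
  exact coeff_pow_eq_sum_piFinset_Icc hF0 hr (by omega)
end

section
/- For every integer α ≥ 2, the formal power series R(X) = Σ_{n≥2} r_α(n)·X^{n−1} with rational coefficients satisfies the functional equation R(X) = X · Σ_{γ=0}^{α−1} R(X)^γ / γ! in the ring of formal power series ℚ⟦X⟧. -/
open Finset PowerSeries

/-- The number `r_α(n)` of combinatorially inequivalent rooted tree graphs with
`n` vertices, root of coordination number 1, and all coordination numbers at
most `α`, given by the paper's closed (Cayley-type) formula, as a rational
number. -/
def rootedTreesQ (α n : ℕ) : ℚ :=
  (1 / (n - 1 : ℚ)) *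
    ∑ f ∈ (Fintype.piFinset fun _ : Fin (n - 1) => Finset.range α) |>.filter
        (fun f => ∑ i, f i = n - 2),
      ∏ i, (1 : ℚ) / (Nat.factorial (f i))

/-!
With `φ(t) = Σ_{γ<α} t^γ/γ!` the truncated exponential, the equation says that `R` solves
`S = X·φ(S)`. A solution exists because `T ↦ X·φ(T)` is a contraction for the `X`-adic
valuation, and Lagrange inversion, `n·[Xⁿ] Sᵏ = k·[t^(n-k)] φⁿ`, computes its coefficients.
Lagrange inversion follows by strong induction on `n` from `Sᵏ = Xᵏ·φ(S)ᵏ` and the convolution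
identity obtained from `(m + k)·X(pᵏ)'·pᵐ = k·X(p^(m+k))'`. Finally, expanding `φⁿ` as a product
of `n` copies of `φ` turns `[t^(n-1)] φⁿ` into the tuple sum defining `r_α(n + 1)`.
-/

open scoped Polynomial

namespace Polynomial

theorem sub_dvd_aeval_sub {R A : Type*} [CommRing R] [CommRing A] [Algebra R A]
    (a b : A) (p : R[X]) : a - b ∣ aeval a p - aeval b p := by
  simpa only [aeval_def, eval₂_eq_eval_map] using sub_dvd_eval_sub a b (p.map (algebraMap R A))

theorem coeff_X_mul_derivative {R : Type*} [Semiring R] (p : R[X]) (n : ℕ) :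
    (X * derivative p).coeff n = n * p.coeff n := by
  cases n with
  | zero => simp
  | succ n => rw [coeff_X_mul, coeff_derivative, ← Nat.cast_succ, Nat.cast_comm]

theorem add_mul_sum_coeff_pow_mul_coeff_pow {R : Type*} [CommRing R] (p : R[X]) (k m : ℕ) :
    ((m : R) + k) * ∑ j ∈ range (m + 1), j * (p ^ k).coeff j * (p ^ m).coeff (m - j)
      = k * m * (p ^ (m + k)).coeff m := by
  have h : C ((m : R) + k) * (X * derivative (p ^ k) * p ^ m)
      = C (k : R) * (X * derivative (p ^ (m + k))) := by
    rcases k with _ | k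
    · simp
    · rw [derivative_pow_succ, ← add_assoc, derivative_pow_succ]
      simp only [map_add, map_natCast, map_one]
      push_cast
      ring
  have hm := congrArg (coeff · m) h
  rw [coeff_C_mul, coeff_C_mul, coeff_X_mul_derivative, coeff_mul,
    Nat.sum_antidiagonal_eq_sum_range_succ_mk] at hm
  simp only [coeff_X_mul_derivative] at hm
  rw [hm]
  ring

end Polynomial

namespace PowerSeries

section Contraction

variable {R : Type*} [CommRing R] {F : R⟦X⟧ → R⟦X⟧}

theorem X_pow_dvd_iterate_succ_sub
    (hF : ∀ n T U, (X : R⟦X⟧) ^ n ∣ T - U → X ^ (n + 1) ∣ F T - F U) (n : ℕ) :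
    (X : R⟦X⟧) ^ n ∣ F^[n + 1] 0 - F^[n] 0 := by
  induction n with
  | zero => simp
  | succ n ih => simpa only [Function.iterate_succ_apply'] using hF _ _ _ ih

theorem coeff_iterate_of_lt
    (hF : ∀ n T U, (X : R⟦X⟧) ^ n ∣ T - U → X ^ (n + 1) ∣ F T - F U) {m n : ℕ} (h : m < n) :
    coeff m (F^[n] 0) = coeff m (F^[m + 1] 0) := by
  induction n, h using Nat.le_induction with
  | base => rfl
  | succ n hmn ih =>
    rw [← ih, ← sub_eq_zero, ← map_sub]
    exact X_pow_dvd_iff.1 (X_pow_dvd_iterate_succ_sub hF n) m hmn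

theorem exists_isFixedPt_of_X_pow_dvd_sub
    (hF : ∀ n T U, (X : R⟦X⟧) ^ n ∣ T - U → X ^ (n + 1) ∣ F T - F U) :
    ∃ S, Function.IsFixedPt F S := by
  set S : R⟦X⟧ := mk fun n ↦ coeff n (F^[n + 1] 0)
  have hS (n : ℕ) : (X : R⟦X⟧) ^ n ∣ S - F^[n] 0 :=
    X_pow_dvd_iff.2 fun m hm ↦ by simp [S, coeff_iterate_of_lt hF hm]
  refine ⟨S, ext fun n ↦ ?_⟩
  have h := X_pow_dvd_iff.1 (hF n _ _ (hS n)) n n.lt_succ_self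
  rw [← Function.iterate_succ_apply' F n, map_sub, sub_eq_zero] at h
  rw [h]
  exact (coeff_mk n fun n ↦ coeff n (F^[n + 1] 0)).symm

end Contraction

theorem exists_eq_X_mul_aeval {R : Type*} [CommRing R] (φ : R[X]) :
    ∃ S : R⟦X⟧, S = X * Polynomial.aeval S φ := by
  obtain ⟨S, hS⟩ := exists_isFixedPt_of_X_pow_dvd_sub
    (F := fun T : R⟦X⟧ ↦ X * Polynomial.aeval T φ) fun n T U h ↦ by
      rw [← mul_sub, pow_succ']
      exact mul_dvd_mul_left X (h.trans (Polynomial.sub_dvd_aeval_sub T U φ))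
  exact ⟨S, hS.symm⟩

theorem coeff_aeval_of_constantCoeff_eq_zero {R : Type*} [CommRing R] {S : R⟦X⟧}
    (hS : constantCoeff S = 0) (q : R[X]) (m : ℕ) :
    coeff m (Polynomial.aeval S q) = ∑ j ∈ range (m + 1), q.coeff j * coeff m (S ^ j) := by
  rw [Polynomial.aeval_eq_sum_range' (n := q.natDegree + m + 1) (by omega), map_sum]
  simp only [coeff_smul, smul_eq_mul]
  refine (sum_subset (range_subset_range.2 (by omega)) fun j _ hj ↦ ?_).symm
  have hmj : m < j := by simpa using hj
  rw [X_pow_dvd_iff.1 (pow_dvd_pow_of_dvd (X_dvd_iff.2 hS) j) m hmj, mul_zero]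

theorem natCast_mul_coeff_pow_of_eq_X_mul_aeval {K : Type*} [CommRing K] [IsDomain K]
    [CharZero K] {φ : K[X]} {S : K⟦X⟧} (hS : S = X * Polynomial.aeval S φ) (n k : ℕ)
    (hkn : k ≤ n) : (n : K) * coeff n (S ^ k) = k * (φ ^ n).coeff (n - k) := by
  have hS₀ : constantCoeff S = 0 := by rw [hS]; simp
  induction n using Nat.strong_induction_on generalizing k with
  | _ n ih =>
  obtain ⟨m, rfl⟩ := Nat.exists_eq_add_of_le' hkn
  rw [Nat.add_sub_cancel, Nat.cast_add]
  rcases Nat.eq_zero_or_pos k with rfl | hk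
  · simp [coeff_one]
  have hexpand : coeff (m + k) (S ^ k)
      = ∑ j ∈ range (m + 1), (φ ^ k).coeff j * coeff m (S ^ j) := by
    conv_lhs => rw [hS, mul_pow, ← map_pow, coeff_X_pow_mul]
    exact coeff_aeval_of_constantCoeff_eq_zero hS₀ _ m
  rcases Nat.eq_zero_or_pos m with rfl | hm
  · rw [hexpand]
    simp
  refine mul_left_cancel₀ (Nat.cast_ne_zero.2 hm.ne' : (m : K) ≠ 0) ?_
  calc (m : K) * ((m + k) * coeff (m + k) (S ^ k))
      = (m + k) * ∑ j ∈ range (m + 1), (φ ^ k).coeff j * (m * coeff m (S ^ j)) := by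
        rw [hexpand, mul_left_comm, mul_sum]
        exact congrArg _ (sum_congr rfl fun j _ ↦ mul_left_comm _ _ _)
    _ = (m + k) * ∑ j ∈ range (m + 1), j * (φ ^ k).coeff j * (φ ^ m).coeff (m - j) := by
        refine congrArg _ (sum_congr rfl fun j hj ↦ ?_)
        rw [ih m (by omega) j (Nat.lt_succ_iff.1 (mem_range.1 hj))]
        ring
    _ = k * m * (φ ^ (m + k)).coeff m := φ.add_mul_sum_coeff_pow_mul_coeff_pow k m
    _ = m * (k * (φ ^ (m + k)).coeff m) := by ring

theorem coeff_trunc_pow {R : Type*} [CommSemiring R] (f : R⟦X⟧) (N k m : ℕ) :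
    (trunc N f ^ k).coeff m
      = ∑ g ∈ (Fintype.piFinset fun _ : Fin k ↦ range N) with ∑ i, g i = m,
          ∏ i, coeff (g i) f := by
  have htrunc : trunc N f = ∑ j ∈ range N, Polynomial.C (coeff j f) * Polynomial.X ^ j := by
    simp [trunc_apply, Polynomial.C_mul_X_pow_eq_monomial]
  rw [htrunc, ← Fin.prod_const, prod_univ_sum, Polynomial.finsetSum_coeff, sum_filter]
  refine sum_congr rfl fun g _ ↦ ?_
  rw [prod_mul_distrib, ← map_prod, prod_pow_eq_pow_sum, Polynomial.coeff_C_mul_X_pow]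
  simp only [eq_comm]

end PowerSeries

theorem eq_rootedTrees_series_of_eq_X_mul_aeval (α : ℕ) {S : ℚ⟦X⟧}
    (hS : S = X * Polynomial.aeval S (trunc α (exp ℚ))) :
    S = mk fun k ↦ if k = 0 then 0 else rootedTreesQ α (k + 1) := by
  ext (_ | n)
  · rw [hS]; simp
  have h := natCast_mul_coeff_pow_of_eq_X_mul_aeval hS (n + 1) 1 (by omega)
  rw [pow_one, coeff_trunc_pow] at h
  simp only [coeff_mk, coeff_exp, Algebra.algebraMap_self, RingHom.id_apply] at h ⊢
  rw [Nat.add_sub_cancel, Nat.cast_one, one_mul] at h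
  rw [if_neg n.succ_ne_zero, rootedTreesQ, Nat.add_sub_cancel, show n + 1 + 1 - 2 = n by omega,
    ← h]
  push_cast
  field_simp
  ring

theorem rootedTrees_generating_series_eq_general (α : ℕ) :
    (PowerSeries.mk fun k => if k = 0 then (0 : ℚ) else rootedTreesQ α (k + 1))
      = PowerSeries.X *
        ∑ γ ∈ Finset.range α,
          ((Nat.factorial γ : ℚ))⁻¹ •
            (PowerSeries.mk fun k =>
              if k = 0 then (0 : ℚ) else rootedTreesQ α (k + 1)) ^ γ := by
  obtain ⟨S, hS⟩ := exists_eq_X_mul_aeval (trunc α (exp ℚ))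
  rw [← eq_rootedTrees_series_of_eq_X_mul_aeval α hS]
  conv_lhs => rw [hS]
  rw [Polynomial.aeval_def, eval₂_trunc_eq_sum_range]
  simp [coeff_exp, Algebra.smul_def]

/-- **Functional equation for the generating series of rooted branched
polymers.**  For `α ≥ 2`, the formal power series
`R(X) = Σ_{n≥2} r_α(n)·X^{n−1} ∈ ℚ⟦X⟧` satisfies
`R(X) = X · Σ_{γ=0}^{α−1} R(X)^γ / γ!`. -/
theorem rootedTrees_generating_series_eq (α : ℕ) (hα : 2 ≤ α) :
    (PowerSeries.mk fun k => if k = 0 then (0 : ℚ) else rootedTreesQ α (k + 1))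
      = PowerSeries.X *
        ∑ γ ∈ Finset.range α,
          ((Nat.factorial γ : ℚ))⁻¹ •
            (PowerSeries.mk fun k =>
              if k = 0 then (0 : ℚ) else rootedTreesQ α (k + 1)) ^ γ :=
  rootedTrees_generating_series_eq_general α
end

section
/- For every integer α ≥ 3, the equation (R − 1)·g_α(R) = R^α/(α−1)! has exactly one solution R_c in the open interval (0, ∞); moreover R_c > 1. Equivalently, g_α(R) − R·g_α′(R) = 1 − Σ_{γ=1}^{α−1} (γ−1)·R^γ/γ! is strictly decreasing on (0,∞) and has a unique positive zero, namely R_c. -/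
open Finset

/-- The truncated exponential `g_α(R) = Σ_{γ=0}^{α−1} R^γ/γ!`. -/
noncomputable def truncExp (α : ℕ) (R : ℝ) : ℝ :=
  ∑ γ ∈ Finset.range α, R ^ γ / (Nat.factorial γ)

private noncomputable def Ssum (n : ℕ) (R : ℝ) : ℝ :=
  ∑ i ∈ Finset.range n, (i : ℝ) * R ^ (i + 1) / (Nat.factorial (i + 1))

private lemma hasDerivAt_truncExp (n : ℕ) (R : ℝ) :
    HasDerivAt (truncExp (n + 1)) (truncExp n R) R := by
  have h : HasDerivAt (truncExp (n + 1))
      (∑ γ ∈ Finset.range (n + 1), ((γ : ℝ) * R ^ (γ - 1)) / (Nat.factorial γ)) R := by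
    unfold truncExp
    apply HasDerivAt.fun_sum
    intro γ _
    exact (hasDerivAt_pow γ R).div_const _
  convert h using 1
  rw [Finset.sum_range_succ']
  simp only [Nat.cast_zero, zero_mul, Nat.factorial_zero, Nat.cast_one, zero_div, add_zero]
  unfold truncExp
  apply Finset.sum_congr rfl
  intro i _
  rw [Nat.factorial_succ]
  have h1 : ((i : ℝ) + 1) ≠ 0 := by positivity
  push_cast
  field_simp

private lemma deriv_truncExp (n : ℕ) (R : ℝ) :
    deriv (truncExp (n + 1)) R = truncExp n R :=
  (hasDerivAt_truncExp n R).deriv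

/-- identity A : F R = R^(n+1)/n! - (R-1) g R -/
private lemma idA (n : ℕ) (R : ℝ) :
    truncExp (n + 1) R - R * truncExp n R
      = R ^ (n + 1) / (Nat.factorial n) - (R - 1) * truncExp (n + 1) R := by
  have h : R * truncExp (n + 1) R = R * truncExp n R + R ^ (n + 1) / (Nat.factorial n) := by
    unfold truncExp
    rw [Finset.sum_range_succ, mul_add]
    ring
  nlinarith [h]

/-- identity B : F R = 1 - Ssum n R -/
private lemma idB (n : ℕ) (R : ℝ) :
    truncExp (n + 1) R - R * truncExp n R = 1 - Ssum n R := by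
  unfold truncExp Ssum
  rw [Finset.sum_range_succ']
  simp only [pow_zero, Nat.factorial_zero, Nat.cast_one]
  rw [Finset.mul_sum, div_one]
  have key : ∀ i ∈ Finset.range n,
      R ^ (i + 1) / (Nat.factorial (i + 1))
        = R * (R ^ i / (Nat.factorial i)) - (i : ℝ) * R ^ (i + 1) / (Nat.factorial (i + 1)) := by
    intro i _
    rw [Nat.factorial_succ]
    have h0 : (Nat.factorial i : ℝ) ≠ 0 := by positivity
    have h1 : ((i : ℝ) + 1) ≠ 0 := by positivity
    push_cast
    field_simp
    ring
  rw [Finset.sum_congr rfl key, Finset.sum_sub_distrib]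
  ring

private lemma icc_eq (n : ℕ) (R : ℝ) :
    ∑ γ ∈ Finset.Icc 1 n, (γ - 1 : ℝ) * R ^ γ / (Nat.factorial γ) = Ssum n R := by
  rw [← Finset.Ico_add_one_right_eq_Icc, Finset.sum_Ico_eq_sum_range]
  simp only [Nat.add_sub_cancel]
  unfold Ssum
  apply Finset.sum_congr rfl
  intro i _
  rw [Nat.add_comm 1 i]
  push_cast
  ring

private lemma Ssum_strict (n : ℕ) (hn : 2 ≤ n) {a b : ℝ} (ha : 0 < a) (hab : a < b) :
    Ssum n a < Ssum n b := by
  unfold Ssum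
  apply Finset.sum_lt_sum
  · intro i _
    gcongr
  · refine ⟨1, Finset.mem_range.mpr (by omega), ?_⟩
    gcongr

/-- **Uniqueness of the critical point for branched polymers.**
For `α ≥ 3`, the equation `(R − 1)·g_α(R) = R^α/(α−1)!` has exactly one
solution `R_c` in `(0, ∞)`, and `R_c > 1`.  Equivalently,
`g_α(R) − R·g_α′(R) = 1 − Σ_{γ=1}^{α−1} (γ−1)·R^γ/γ!` is strictly decreasing
on `(0, ∞)`, and its positive zeros are exactly the positive solutions of the
critical equation. -/
theorem branched_polymer_critical_point_unique (α : ℕ) (hα : 3 ≤ α) :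
    (∃! Rc : ℝ, Rc ∈ Set.Ioi (0 : ℝ) ∧
        (Rc - 1) * truncExp α Rc = Rc ^ α / (Nat.factorial (α - 1))) ∧
    (∀ Rc : ℝ, 0 < Rc →
        (Rc - 1) * truncExp α Rc = Rc ^ α / (Nat.factorial (α - 1)) → 1 < Rc) ∧
    (∀ R : ℝ, truncExp α R - R * deriv (truncExp α) R
        = 1 - ∑ γ ∈ Finset.Icc 1 (α - 1), (γ - 1 : ℝ) * R ^ γ / (Nat.factorial γ)) ∧
    StrictAntiOn (fun R => truncExp α R - R * deriv (truncExp α) R)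
      (Set.Ioi (0 : ℝ)) ∧
    (∀ R : ℝ, 0 < R →
        (truncExp α R - R * deriv (truncExp α) R = 0 ↔
          (R - 1) * truncExp α R = R ^ α / (Nat.factorial (α - 1)))) := by
  obtain ⟨n, rfl⟩ : ∃ n, α = n + 1 := ⟨α - 1, by omega⟩
  have hn : 2 ≤ n := by omega
  simp only [Nat.add_sub_cancel]
  -- F denotes the function R ↦ truncExp (n+1) R - R * deriv (truncExp (n+1)) R
  have hF : ∀ R : ℝ, truncExp (n + 1) R - R * deriv (truncExp (n + 1)) R = 1 - Ssum n R := by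
    intro R
    rw [deriv_truncExp, idB]
  have hFA : ∀ R : ℝ, truncExp (n + 1) R - R * deriv (truncExp (n + 1)) R
      = R ^ (n + 1) / (Nat.factorial n) - (R - 1) * truncExp (n + 1) R := by
    intro R
    rw [deriv_truncExp, idA]
  have hiff : ∀ R : ℝ, (truncExp (n + 1) R - R * deriv (truncExp (n + 1)) R = 0 ↔
      (R - 1) * truncExp (n + 1) R = R ^ (n + 1) / (Nat.factorial n)) := by
    intro R
    rw [hFA R]
    constructor
    · intro h; linarith
    · intro h; linarith
  have hanti : StrictAntiOn (fun R => truncExp (n + 1) R - R * deriv (truncExp (n + 1)) R)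
      (Set.Ioi (0 : ℝ)) := by
    intro a ha b _ hab
    simp only [hF]
    have := Ssum_strict n hn (Set.mem_Ioi.mp ha) hab
    linarith
  -- F 1 > 0
  have hF1 : 0 < truncExp (n + 1) 1 - 1 * deriv (truncExp (n + 1)) 1 := by
    rw [hFA]
    simp only [one_pow, sub_self, zero_mul, sub_zero]
    positivity
  -- F 2 < 0
  have hF2 : truncExp (n + 1) 2 - 2 * deriv (truncExp (n + 1)) 2 < 0 := by
    rw [hF]
    have h2 : (2 : ℝ) ≤ Ssum n 2 := by
      have hle := Finset.single_le_sum
        (f := fun i : ℕ => (i : ℝ) * (2:ℝ) ^ (i + 1) / (Nat.factorial (i + 1)))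
        (fun i _ => by positivity) (Finset.mem_range.mpr (show 1 < n by omega))
      unfold Ssum
      norm_num [Nat.factorial_succ] at hle ⊢
      linarith
    linarith
  -- continuity of F
  have hcont : Continuous (fun R : ℝ => truncExp (n + 1) R - R * deriv (truncExp (n + 1)) R) := by
    have : (fun R : ℝ => truncExp (n + 1) R - R * deriv (truncExp (n + 1)) R)
        = fun R : ℝ => 1 - Ssum n R := funext hF
    rw [this]
    unfold Ssum
    continuity
  -- existence of a zero in (1,2)
  obtain ⟨Rc, hRcmem, hRczero⟩ :
      ∃ Rc ∈ Set.Ioo (1 : ℝ) 2,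
        truncExp (n + 1) Rc - Rc * deriv (truncExp (n + 1)) Rc = 0 := by
    have hsub := intermediate_value_Ioo' (a := (1:ℝ)) (b := 2) (by norm_num)
      (hcont.continuousOn (s := Set.Icc 1 2))
    have h0mem : (0 : ℝ) ∈ Set.Ioo
        (truncExp (n + 1) 2 - 2 * deriv (truncExp (n + 1)) 2)
        (truncExp (n + 1) 1 - 1 * deriv (truncExp (n + 1)) 1) := ⟨hF2, hF1⟩
    obtain ⟨Rc, hRc, hval⟩ := hsub h0mem
    exact ⟨Rc, hRc, hval⟩
  have hRcpos : (0 : ℝ) < Rc := by linarith [hRcmem.1]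
  have hRcgt1 : (1 : ℝ) < Rc := hRcmem.1
  have hRceq : (Rc - 1) * truncExp (n + 1) Rc = Rc ^ (n + 1) / (Nat.factorial n) :=
    (hiff Rc).mp hRczero
  -- positive solutions are > 1
  have hgt1 : ∀ R : ℝ, 0 < R →
      (R - 1) * truncExp (n + 1) R = R ^ (n + 1) / (Nat.factorial n) → 1 < R := by
    intro R hR heq
    by_contra hle
    push_neg at hle
    have hz : truncExp (n + 1) R - R * deriv (truncExp (n + 1)) R = 0 := (hiff R).mpr heq
    rcases lt_or_eq_of_le hle with h | h
    · have := hanti (Set.mem_Ioi.mpr hR) (Set.mem_Ioi.mpr one_pos) h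
      simp only at this
      rw [hz] at this
      linarith
    · rw [h] at hz
      linarith
  refine ⟨⟨Rc, ⟨Set.mem_Ioi.mpr hRcpos, hRceq⟩, ?_⟩, hgt1, ?_, hanti, fun R _ => hiff R⟩
  · rintro y ⟨hy, hyeq⟩
    have hyz : truncExp (n + 1) y - y * deriv (truncExp (n + 1)) y = 0 := (hiff y).mpr hyeq
    have := hanti.injOn hy (Set.mem_Ioi.mpr hRcpos)
    apply this
    simp only [hyz, hRczero]
  · intro R
    rw [hF R, icc_eq]
end

section
/- Let α ≥ 3 be an integer and let β(R) = R / g_α(R) for R > 0. Let R_c be the unique positive solution of (R − 1)·g_α(R) = R^α/(α−1)!. Then β′(R) > 0 for 0 < R < R_c, β′(R_c) = 0, and β′(R) < 0 for R > R_c, so β attains its strict global maximum on (0,∞) at R = R_c, with maximum value β_c = R_c/g_α(R_c); moreover the second derivative at the critical point is strictly negative: β″(R_c) = −R_c · g_α″(R_c) / g_α(R_c)² < 0. -/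
open Finset

lemma hasDerivAt_truncExp_s12 (α : ℕ) (R : ℝ) :
    HasDerivAt (truncExp α) (truncExp (α - 1) R) R := by
  cases α with
  | zero =>
    have h0 : truncExp 0 = fun _ => (0:ℝ) := funext fun x => by simp [truncExp]
    rw [h0]; simpa [truncExp] using hasDerivAt_const R (0 : ℝ)
  | succ n =>
      have h : HasDerivAt (fun R : ℝ => ∑ γ ∈ Finset.range (n + 1), R ^ γ / (Nat.factorial γ))
          (∑ γ ∈ Finset.range (n + 1), ((γ : ℝ) * R ^ (γ - 1) / (Nat.factorial γ))) R := by
        apply HasDerivAt.fun_sum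
        intro γ _
        simpa using (hasDerivAt_pow γ R).div_const (Nat.factorial γ : ℝ)
      have heq : (∑ γ ∈ Finset.range (n + 1), ((γ : ℝ) * R ^ (γ - 1) / (Nat.factorial γ)))
          = truncExp n R := by
        rw [Finset.sum_range_succ']
        simp only [Nat.cast_zero, zero_mul, zero_div, add_zero]
        unfold truncExp
        apply Finset.sum_congr rfl
        intro i _
        have h1 : (Nat.factorial i : ℝ) ≠ 0 := by
          exact_mod_cast (Nat.factorial_pos i).ne'
        have h2 : ((Nat.factorial (i + 1) : ℝ)) = (i + 1) * (Nat.factorial i : ℝ) := by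
          rw [Nat.factorial_succ]; push_cast; ring
        simp only [Nat.add_sub_cancel, h2]
        push_cast
        field_simp
      have : n + 1 - 1 = n := rfl
      rw [this, ← heq]
      exact h

lemma continuous_truncExp (α : ℕ) : Continuous (truncExp α) := by
  unfold truncExp
  exact continuous_finset_sum _ fun i _ => (continuous_pow i).div_const _

lemma truncExp_pos (α : ℕ) (hα : 1 ≤ α) (R : ℝ) (hR : 0 ≤ R) : 0 < truncExp α R := by
  unfold truncExp
  have h0 : (0:ℝ) < R ^ 0 / (Nat.factorial 0) := by simp
  refine lt_of_lt_of_le h0 (Finset.single_le_sum (f := fun γ => R ^ γ / (Nat.factorial γ)) ?_ ?_)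
  · intro i _; positivity
  · exact Finset.mem_range.mpr hα


/-- **The critical fugacity is a strict maximum of `β(R) = R/g_α(R)`.**
Let `α ≥ 3` and let `R_c` be the unique positive solution of
`(R − 1)·g_α(R) = R^α/(α−1)!`.  Then `β(R) = R/g_α(R)` is increasing before
`R_c`, stationary at `R_c`, decreasing after `R_c`, attains its strict global
maximum on `(0,∞)` at `R_c` with value `β_c = R_c/g_α(R_c)`, and its second
derivative at `R_c` equals `−R_c·g_α″(R_c)/g_α(R_c)² < 0`. -/
theorem critical_fugacity_strict_max (α : ℕ) (hα : 3 ≤ α) (Rc : ℝ) (hRc : 0 < Rc)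
    (heq : (Rc - 1) * truncExp α Rc = Rc ^ α / (Nat.factorial (α - 1)))
    (huniq : ∀ R : ℝ, 0 < R →
        (R - 1) * truncExp α R = R ^ α / (Nat.factorial (α - 1)) → R = Rc) :
    (∀ R : ℝ, 0 < R → R < Rc → 0 < deriv (fun R => R / truncExp α R) R) ∧
    deriv (fun R => R / truncExp α R) Rc = 0 ∧
    (∀ R : ℝ, Rc < R → deriv (fun R => R / truncExp α R) R < 0) ∧
    (∀ R : ℝ, 0 < R → R ≠ Rc → R / truncExp α R < Rc / truncExp α Rc) ∧
    deriv (deriv (fun R => R / truncExp α R)) Rc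
      = -Rc * deriv (deriv (truncExp α)) Rc / (truncExp α Rc) ^ 2 ∧
    deriv (deriv (fun R => R / truncExp α R)) Rc < 0 := by
  clear huniq
  obtain ⟨m, rfl⟩ : ∃ m, α = m + 3 := ⟨α - 3, by omega⟩
  have e1 : m + 3 - 1 = m + 2 := by omega
  have e2 : m + 2 - 1 = m + 1 := by omega
  rw [e1] at heq
  -- derivatives of truncExp
  have hd1 : ∀ R : ℝ, HasDerivAt (truncExp (m + 3)) (truncExp (m + 2) R) R := by
    intro R; have := hasDerivAt_truncExp_s12 (m + 3) R; rwa [e1] at this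
  have hd2 : ∀ R : ℝ, HasDerivAt (truncExp (m + 2)) (truncExp (m + 1) R) R := by
    intro R; have := hasDerivAt_truncExp_s12 (m + 2) R; rwa [e2] at this
  -- positivity
  have hgpos : ∀ R : ℝ, 0 ≤ R → 0 < truncExp (m + 3) R :=
    fun R hR => truncExp_pos _ (by omega) R hR
  have hg2pos : ∀ R : ℝ, 0 ≤ R → 0 < truncExp (m + 1) R :=
    fun R hR => truncExp_pos _ (by omega) R hR
  -- the numerator function φ
  set φ : ℝ → ℝ := fun R => truncExp (m + 3) R - R * truncExp (m + 2) R with hφdef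
  have hφd : ∀ R : ℝ, HasDerivAt φ (-(R * truncExp (m + 1) R)) R := by
    intro R
    have h := (hd1 R).fun_sub ((hasDerivAt_id R).fun_mul (hd2 R))
    refine h.congr_deriv ?_
    simp only [id_eq]
    ring
  -- φ Rc = 0
  have hsplit : truncExp (m + 3) Rc = truncExp (m + 2) Rc + Rc ^ (m + 2) / (Nat.factorial (m + 2)) := by
    unfold truncExp
    rw [Finset.sum_range_succ]
  have hφRc : φ Rc = 0 := by
    simp only [hφdef]
    have h2 : truncExp (m + 2) Rc
        = truncExp (m + 3) Rc - Rc ^ (m + 2) / (Nat.factorial (m + 2)) := by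
      rw [hsplit]; ring
    rw [h2]
    linear_combination -heq
  -- derivative of β
  have hβ : ∀ R : ℝ, truncExp (m + 3) R ≠ 0 →
      HasDerivAt (fun R => R / truncExp (m + 3) R) (φ R / (truncExp (m + 3) R) ^ 2) R := by
    intro R hne
    have h := (hasDerivAt_id R).fun_div (hd1 R) hne
    refine h.congr_deriv ?_
    simp only [hφdef, id_eq]
    ring
  -- φ strictly decreasing on [0, ∞)
  have hanti : StrictAntiOn φ (Set.Ici (0 : ℝ)) := by
    apply strictAntiOn_of_deriv_neg (convex_Ici 0)
    · exact ((continuous_truncExp _).sub (continuous_id.mul (continuous_truncExp _))).continuousOn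
    · intro x hx
      rw [interior_Ici] at hx
      rw [(hφd x).deriv]
      have := hg2pos x (le_of_lt hx)
      have := mul_pos hx this
      linarith
  have hpos : ∀ R : ℝ, 0 < R → R < Rc → 0 < φ R := by
    intro R h1 h2
    have := hanti (Set.mem_Ici.mpr h1.le) (Set.mem_Ici.mpr hRc.le) h2
    rw [hφRc] at this
    linarith
  have hneg : ∀ R : ℝ, Rc < R → φ R < 0 := by
    intro R h1
    have := hanti (Set.mem_Ici.mpr hRc.le) (Set.mem_Ici.mpr (hRc.trans h1).le) h1
    rw [hφRc] at this
    linarith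
  -- parts 1-3
  have part1 : ∀ R : ℝ, 0 < R → R < Rc → 0 < deriv (fun R => R / truncExp (m + 3) R) R := by
    intro R h1 h2
    rw [(hβ R (hgpos R h1.le).ne').deriv]
    exact div_pos (hpos R h1 h2) (pow_pos (hgpos R h1.le) 2)
  have part2 : deriv (fun R => R / truncExp (m + 3) R) Rc = 0 := by
    rw [(hβ Rc (hgpos Rc hRc.le).ne').deriv, hφRc, zero_div]
  have part3 : ∀ R : ℝ, Rc < R → deriv (fun R => R / truncExp (m + 3) R) R < 0 := by
    intro R h1
    have hR : 0 < R := hRc.trans h1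
    rw [(hβ R (hgpos R hR.le).ne').deriv]
    exact div_neg_of_neg_of_pos (hneg R h1) (pow_pos (hgpos R hR.le) 2)
  -- part 4: strict max
  have hcont : ∀ s : Set ℝ, (∀ x ∈ s, (0:ℝ) < x) →
      ContinuousOn (fun R => R / truncExp (m + 3) R) s := by
    intro s hs
    exact ContinuousOn.div continuousOn_id (continuous_truncExp _).continuousOn
      (fun x hx => (hgpos x (hs x hx).le).ne')
  have hmono : StrictMonoOn (fun R => R / truncExp (m + 3) R) (Set.Ioc 0 Rc) := by
    apply strictMonoOn_of_deriv_pos (convex_Ioc 0 Rc) (hcont _ fun x hx => hx.1)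
    intro x hx
    rw [interior_Ioc] at hx
    exact part1 x hx.1 hx.2
  have hanti2 : StrictAntiOn (fun R => R / truncExp (m + 3) R) (Set.Ici Rc) := by
    apply strictAntiOn_of_deriv_neg (convex_Ici Rc)
      (hcont _ fun x hx => lt_of_lt_of_le hRc hx)
    intro x hx
    rw [interior_Ici] at hx
    exact part3 x hx
  have part4 : ∀ R : ℝ, 0 < R → R ≠ Rc →
      R / truncExp (m + 3) R < Rc / truncExp (m + 3) Rc := by
    intro R hR hne
    rcases lt_or_gt_of_ne hne with h | h
    · exact hmono (Set.mem_Ioc.mpr ⟨hR, h.le⟩) (Set.mem_Ioc.mpr ⟨hRc, le_rfl⟩) h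
    · exact hanti2 (Set.mem_Ici.mpr le_rfl) (Set.mem_Ici.mpr h.le) h
  -- part 5: second derivative
  have hev : deriv (fun R => R / truncExp (m + 3) R)
      =ᶠ[nhds Rc] fun R => φ R / (truncExp (m + 3) R) ^ 2 := by
    filter_upwards [isOpen_Ioi.mem_nhds (show Rc ∈ Set.Ioi (0:ℝ) from hRc)] with x hx
    exact (hβ x (hgpos x (le_of_lt hx)).ne').deriv
  have hgne : truncExp (m + 3) Rc ≠ 0 := (hgpos Rc hRc.le).ne'
  have hψ : HasDerivAt (fun R => φ R / (truncExp (m + 3) R) ^ 2)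
      (((-(Rc * truncExp (m + 1) Rc)) * (truncExp (m + 3) Rc) ^ 2
        - φ Rc * ((2 : ℕ) * truncExp (m + 3) Rc ^ (2 - 1) * truncExp (m + 2) Rc))
        / ((truncExp (m + 3) Rc) ^ 2) ^ 2) Rc :=
    (hφd Rc).div ((hd1 Rc).pow 2) (pow_ne_zero 2 hgne)
  have hdd : deriv (deriv (fun R => R / truncExp (m + 3) R)) Rc
      = -(Rc * truncExp (m + 1) Rc) / (truncExp (m + 3) Rc) ^ 2 := by
    rw [hev.deriv_eq, hψ.deriv, hφRc]
    field_simp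
    ring
  have hdfun : deriv (truncExp (m + 3)) = truncExp (m + 2) := funext fun R => (hd1 R).deriv
  have hdd2 : deriv (deriv (truncExp (m + 3))) Rc = truncExp (m + 1) Rc := by
    rw [hdfun, (hd2 Rc).deriv]
  have part5 : deriv (deriv (fun R => R / truncExp (m + 3) R)) Rc
      = -Rc * deriv (deriv (truncExp (m + 3))) Rc / (truncExp (m + 3) Rc) ^ 2 := by
    rw [hdd, hdd2]; ring
  have part6 : deriv (deriv (fun R => R / truncExp (m + 3) R)) Rc < 0 := by
    rw [hdd]
    apply div_neg_of_neg_of_pos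
    · have := mul_pos hRc (hg2pos Rc hRc.le); linarith
    · exact pow_pos (hgpos Rc hRc.le) 2
  exact ⟨part1, part2, part3, part4, part5, part6⟩
end

section
/- Let α ≥ 3 be an integer, R_c the unique positive solution of (R − 1)·g_α(R) = R^α/(α−1)!, and β_c = R_c/g_α(R_c). Then for every real β with 0 < β < β_c, the series R(β) = Σ_{n≥2} r_α(n)·β^{n−1} converges, its sum satisfies 0 < R(β) < R_c, and R(β) is the unique solution in the interval (0, R_c) of the equation R = β·g_α(R). -/
open Finset

/-!
Read a word `(m₁, …, m_{n-1})` as the preorder list of the numbers of children of the vertices of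
a plane forest (its Łukasiewicz code), a vertex with `x` children carrying the weight `1/x!`. By
the cycle lemma exactly one of the `n - 1` rotations of a word with `m₁ + ⋯ + m_{n-1} = n - 2` is
the code of a single tree, so `r_α(n)` is the total weight of the tree codes of length `n - 1`.
Cutting a code at its root, and a forest code where its excess walk first reaches `-1`, gives
`T = β g_α(T)` and `F_j = T^j` for the generating series `T` of trees and `F_j` of `j`-forests.
Their partial sums are bounded by any nonnegative solution `x` of `x = β g_α(x)`, which exists in
`(0, R_c)` because `R / g_α(R)` increases from `0` to `β_c` on `[0, R_c]`: the numerator of its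
derivative, `(1 - R) g_α(R) + R^α/(α-1)!`, equals `1` at `0` and first vanishes at `R_c`. The same
monotonicity makes the solution in `(0, R_c)` unique.
-/

open scoped Nat

namespace BranchedPolymer

section TruncExp

@[fun_prop]
lemma continuous_truncExp (α : ℕ) : Continuous (truncExp α) :=
  continuous_finsetSum _ fun γ _ => (continuous_pow γ).div_const _

lemma truncExp_succ (α : ℕ) (R : ℝ) :
    truncExp (α + 1) R = truncExp α R + R ^ α / (α ! : ℝ) :=
  sum_range_succ _ _

lemma hasDerivAt_truncExp (α : ℕ) (R : ℝ) : HasDerivAt (truncExp (α + 1)) (truncExp α R) R := by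
  have h : HasDerivAt (truncExp (α + 1))
      (∑ γ ∈ range (α + 1), (γ : ℝ) * R ^ (γ - 1) / (γ ! : ℝ)) R :=
    HasDerivAt.fun_sum fun γ _ => (hasDerivAt_pow γ R).div_const (γ ! : ℝ)
  refine h.congr_deriv ?_
  rw [sum_range_succ', truncExp]
  simp only [CharP.cast_eq_zero, zero_mul, zero_div, add_zero, Nat.add_sub_cancel]
  refine sum_congr rfl fun γ _ => ?_
  rw [Nat.factorial_succ, Nat.cast_mul]
  field_simp

variable {α : ℕ}

lemma one_le_truncExp (hα : α ≠ 0) {R : ℝ} (hR : 0 ≤ R) : 1 ≤ truncExp α R := by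
  have h₀ : 0 ∈ range α := mem_range.2 (Nat.pos_of_ne_zero hα)
  rw [truncExp]
  simpa using single_le_sum (f := fun γ => R ^ γ / (γ ! : ℝ)) (fun γ _ => by positivity) h₀

lemma truncExp_pos (hα : α ≠ 0) {R : ℝ} (hR : 0 ≤ R) : 0 < truncExp α R :=
  one_pos.trans_le (one_le_truncExp hα hR)

lemma hasDerivAt_div_truncExp {R : ℝ} (hR : 0 ≤ R) :
    HasDerivAt (fun R => R / truncExp (α + 1) R)
      (((1 - R) * truncExp (α + 1) R + R ^ (α + 1) / (α ! : ℝ)) / truncExp (α + 1) R ^ 2) R := by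
  refine ((hasDerivAt_id R).div (hasDerivAt_truncExp α R)
    (truncExp_pos α.succ_ne_zero hR).ne').congr_deriv ?_
  rw [id, truncExp_succ, pow_succ]
  ring

/-- This is the numerator of the derivative of `R / g_{α+1}(R)`: it is `1` at `0`, and its
positive zeros are the roots of `(R - 1) g_{α+1}(R) = R^{α+1}/α!`. -/
lemma one_sub_mul_truncExp_add_pos {Rc : ℝ} (hroot : ∀ R : ℝ, 0 < R →
      (R - 1) * truncExp (α + 1) R = R ^ (α + 1) / (α ! : ℝ) → R = Rc)
    {R : ℝ} (hR₀ : 0 ≤ R) (hR : R < Rc) :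
    0 < (1 - R) * truncExp (α + 1) R + R ^ (α + 1) / (α ! : ℝ) := by
  set h : ℝ → ℝ := fun R => (1 - R) * truncExp (α + 1) R + R ^ (α + 1) / (α ! : ℝ)
  have hcont : Continuous h := by unfold h; fun_prop
  have h₀ : h 0 = 1 := by simp [h, truncExp, sum_range_succ']
  by_contra! hle
  obtain ⟨R', hR', hR'root⟩ := intermediate_value_Icc' hR₀ hcont.continuousOn
    (show (0 : ℝ) ∈ Set.Icc (h R) (h 0) by rw [h₀]; exact ⟨hle, zero_le_one⟩)
  have hR'pos : 0 < R' := hR'.1.lt_of_ne fun he => by simp [← he, h₀] at hR'root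
  have := hroot R' hR'pos (by simp only [h] at hR'root; linarith)
  linarith [hR'.2]

lemma strictMonoOn_div_truncExp {Rc : ℝ} (hroot : ∀ R : ℝ, 0 < R →
      (R - 1) * truncExp (α + 1) R = R ^ (α + 1) / (α ! : ℝ) → R = Rc) :
    StrictMonoOn (fun R => R / truncExp (α + 1) R) (Set.Icc 0 Rc) := by
  refine strictMonoOn_of_deriv_pos (convex_Icc 0 Rc) (fun R hR => ?_) fun R hR => ?_
  · exact (hasDerivAt_div_truncExp hR.1).continuousAt.continuousWithinAt
  rw [interior_Icc] at hR
  rw [(hasDerivAt_div_truncExp hR.1.le).deriv]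
  exact div_pos (one_sub_mul_truncExp_add_pos hroot hR.1.le hR.2)
    (pow_pos (truncExp_pos α.succ_ne_zero hR.1.le) 2)

lemma div_truncExp_eq_iff {R β : ℝ} (hR : 0 ≤ R) :
    R / truncExp (α + 1) R = β ↔ R = β * truncExp (α + 1) R :=
  div_eq_iff (truncExp_pos α.succ_ne_zero hR).ne'

lemma exists_eq_mul_truncExp {Rc β : ℝ} (hRc : 0 ≤ Rc) (hβ₀ : 0 < β)
    (hβ : β < Rc / truncExp (α + 1) Rc) : ∃ x ∈ Set.Ioo 0 Rc, x = β * truncExp (α + 1) x := by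
  have hcont : ContinuousOn (fun R => R / truncExp (α + 1) R) (Set.Icc 0 Rc) := fun R hR =>
    (hasDerivAt_div_truncExp hR.1).continuousAt.continuousWithinAt
  obtain ⟨x, hx, hxβ⟩ := intermediate_value_Ioo hRc hcont (by simpa using And.intro hβ₀ hβ)
  exact ⟨x, hx, (div_truncExp_eq_iff hx.1.le).1 hxβ⟩

lemma eq_of_eq_mul_truncExp {Rc β y z : ℝ} (hroot : ∀ R : ℝ, 0 < R →
      (R - 1) * truncExp (α + 1) R = R ^ (α + 1) / (α ! : ℝ) → R = Rc)
    (hy : y ∈ Set.Icc 0 Rc) (hz : z ∈ Set.Icc 0 Rc) (hyβ : y = β * truncExp (α + 1) y)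
    (hzβ : z = β * truncExp (α + 1) z) : y = z :=
  (strictMonoOn_div_truncExp hroot).injOn hy hz <|
    ((div_truncExp_eq_iff hy.1).2 hyβ).trans ((div_truncExp_eq_iff hz.1).2 hzβ).symm

end TruncExp

section LukasiewiczCodes

noncomputable def weight (l : List ℕ) : ℝ := (l.map fun x => (x ! : ℝ)⁻¹).prod

@[simp] lemma weight_nil : weight [] = 1 := rfl

lemma weight_nonneg (l : List ℕ) : 0 ≤ weight l :=
  List.prod_nonneg fun x hx => by
    obtain ⟨y, -, rfl⟩ := List.mem_map.1 hx
    positivity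

lemma weight_cons (x : ℕ) (l : List ℕ) : weight (x :: l) = (x ! : ℝ)⁻¹ * weight l :=
  List.prod_cons

lemma weight_append (a b : List ℕ) : weight (a ++ b) = weight a * weight b := by
  simp [weight]

lemma weight_eq_of_perm {l l' : List ℕ} (h : l.Perm l') : weight l = weight l' :=
  (h.map _).prod_eq

def words (α n : ℕ) : Finset (List ℕ) :=
  (Fintype.piFinset fun _ : Fin n => range α).image List.ofFn

lemma mem_words {α n : ℕ} {l : List ℕ} : l ∈ words α n ↔ l.length = n ∧ ∀ x ∈ l, x < α := by
  simp only [words, mem_image, Fintype.mem_piFinset, mem_range]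
  constructor
  · rintro ⟨f, hf, rfl⟩
    exact ⟨List.length_ofFn, fun x hx => by obtain ⟨i, rfl⟩ := List.mem_ofFn.1 hx; exact hf i⟩
  · rintro ⟨rfl, h⟩
    exact ⟨l.get, fun i => h _ (l.get_mem _), List.ofFn_get l⟩

def excess (l : List ℕ) (t : ℕ) : ℤ := ((l.take t).sum : ℤ) - t

@[simp] lemma excess_zero (l : List ℕ) : excess l 0 = 0 := by simp [excess]

lemma excess_length (l : List ℕ) : excess l l.length = l.sum - l.length := by
  simp [excess]

lemma sub_one_le_excess_succ (l : List ℕ) (t : ℕ) : excess l t - 1 ≤ excess l (t + 1) := by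
  unfold excess
  rcases lt_or_ge t l.length with h | h
  · rw [List.sum_take_succ _ _ h]; push_cast; omega
  · rw [List.take_of_length_le h, List.take_of_length_le (by omega)]; push_cast; omega

lemma excess_cons_succ (x : ℕ) (l : List ℕ) (t : ℕ) :
    excess (x :: l) (t + 1) = x - 1 + excess l t := by
  simp only [excess, List.take_succ_cons, List.sum_cons]; push_cast; ring

lemma excess_take {l : List ℕ} {r t : ℕ} (h : t ≤ r) : excess (l.take r) t = excess l t := by
  rw [excess, excess, List.take_take, min_eq_left h]

lemma excess_drop (l : List ℕ) (r t : ℕ) : excess (l.drop r) t = excess l (r + t) - excess l r := by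
  simp only [excess, List.take_add, List.sum_append]; push_cast; ring

lemma excess_append_of_le {a : List ℕ} (b : List ℕ) {t : ℕ} (h : t ≤ a.length) :
    excess (a ++ b) t = excess a t := by
  rw [← excess_take (l := a ++ b) h, List.take_append_of_le_length le_rfl, List.take_length]

lemma excess_append_length_add (a b : List ℕ) (s : ℕ) :
    excess (a ++ b) (a.length + s) = excess a a.length + excess b s := by
  simp only [excess, List.take_length_add_append, List.sum_append, List.take_length]
  push_cast; ring

/-- `l` lists, in preorder, the numbers of children of the vertices of a forest of `j` plane
trees (its Łukasiewicz code). -/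
def IsForestCode (j : ℕ) (l : List ℕ) : Prop :=
  l.sum + j = l.length ∧ ∀ t < l.length, -(j : ℤ) < excess l t

instance (j : ℕ) : DecidablePred (IsForestCode j) := fun _ => instDecidableAnd

lemma IsForestCode.excess_length {j : ℕ} {l : List ℕ} (h : IsForestCode j l) :
    excess l l.length = -j := by
  rw [BranchedPolymer.excess_length]; have := h.1; omega

lemma isForestCode_nil_iff {j : ℕ} : IsForestCode j [] ↔ j = 0 := by
  simp [IsForestCode]

lemma isForestCode_zero_iff {l : List ℕ} : IsForestCode 0 l ↔ l = [] := by
  refine ⟨fun h => List.eq_nil_of_length_eq_zero ?_, fun h => h ▸ isForestCode_nil_iff.2 rfl⟩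
  by_contra hl
  simpa using h.2 0 (Nat.pos_of_ne_zero hl)

lemma isForestCode_one_cons_iff {x : ℕ} {l : List ℕ} :
    IsForestCode 1 (x :: l) ↔ IsForestCode x l := by
  simp only [IsForestCode, List.sum_cons, List.length_cons]
  refine and_congr (by omega) ⟨fun h t ht => ?_, fun h t ht => ?_⟩
  · have := h (t + 1) (by omega); rw [excess_cons_succ] at this; omega
  · cases t with
    | zero => simp
    | succ t => rw [excess_cons_succ]; have := h t (by omega); omega

lemma exists_first_eq_of_sub_one_le {f : ℕ → ℤ} (hstep : ∀ t, f t - 1 ≤ f (t + 1)) {c : ℤ}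
    {N : ℕ} (h0 : c < f 0) (hN : f N ≤ c) : ∃ t ≤ N, f t = c ∧ ∀ s < t, c < f s := by
  classical
  have hex : ∃ t, f t ≤ c := ⟨N, hN⟩
  have hmin : ∀ s < Nat.find hex, c < f s := fun s hs => not_le.1 (Nat.find_min hex hs)
  obtain ⟨t, ht⟩ : ∃ t, Nat.find hex = t + 1 := Nat.exists_eq_add_one.2 <|
    Nat.pos_of_ne_zero fun h => (h ▸ Nat.find_spec hex).not_gt h0
  refine ⟨t + 1, ht ▸ Nat.find_min' hex hN, ?_, ht ▸ hmin⟩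
  have := hmin t (by omega)
  have := hstep t
  have := ht ▸ Nat.find_spec hex
  omega

lemma isForestCode_append {a b : List ℕ} {j : ℕ} (ha : IsForestCode 1 a) (hb : IsForestCode j b) :
    IsForestCode (j + 1) (a ++ b) := by
  refine ⟨by simp only [List.sum_append, List.length_append]; have := ha.1; have := hb.1; omega,
    fun t ht => ?_⟩
  rw [List.length_append] at ht
  rcases lt_or_ge t a.length with h | h
  · rw [excess_append_of_le b h.le]; have := ha.2 t h; omega
  · obtain ⟨s, rfl⟩ := Nat.exists_eq_add_of_le h
    rw [excess_append_length_add, ha.excess_length]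
    have := hb.2 s (by omega)
    omega

lemma IsForestCode.exists_append {l : List ℕ} {j : ℕ} (hl : IsForestCode (j + 1) l) :
    ∃ a b, IsForestCode 1 a ∧ IsForestCode j b ∧ a ++ b = l := by
  obtain ⟨t, htl, hta, hpos⟩ := exists_first_eq_of_sub_one_le (sub_one_le_excess_succ l)
    (by simp : (-1 : ℤ) < excess l 0) (by rw [hl.excess_length]; omega : excess l l.length ≤ -1)
  have htake : ((l.take t).sum : ℤ) - t = -1 := hta
  refine ⟨l.take t, l.drop t, ⟨?_, fun s hs => ?_⟩, ⟨?_, fun s hs => ?_⟩, l.take_append_drop t⟩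
  · rw [List.length_take, min_eq_left htl]; omega
  · rw [List.length_take] at hs
    rw [excess_take (by omega)]; exact hpos s (by omega)
  · have := congrArg List.sum (l.take_append_drop t)
    rw [List.sum_append] at this
    rw [List.length_drop]; have := hl.1; omega
  · rw [List.length_drop] at hs
    rw [excess_drop, hta]; have := hl.2 (t + s) (by omega); push_cast at this; omega

lemma IsForestCode.append_inj {a a' b b' : List ℕ} (ha : IsForestCode 1 a)
    (ha' : IsForestCode 1 a') (h : a ++ b = a' ++ b') : a = a' ∧ b = b' := by
  refine List.append_inj h ?_
  wlog hle : a.length ≤ a'.length generalizing a a' b b'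
  · exact (this ha' ha h.symm (by omega)).symm
  refine hle.antisymm (not_lt.1 fun hlt => ?_)
  have h1 := ha'.2 a.length hlt
  rw [← excess_append_of_le b' hlt.le, ← h, excess_append_of_le b le_rfl, ha.excess_length] at h1
  omega

lemma excess_rotate_of_le {l : List ℕ} {r t : ℕ} (hr : r ≤ l.length) (ht : t ≤ l.length - r) :
    excess (l.rotate r) t = excess l (r + t) - excess l r := by
  rw [List.rotate_eq_drop_append_take hr, excess_append_of_le _ (by simpa using ht), excess_drop]

lemma excess_rotate_sub_add {l : List ℕ} {r s : ℕ} (hr : r ≤ l.length) (hs : s ≤ r) :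
    excess (l.rotate r) (l.length - r + s) = excess l l.length - excess l r + excess l s := by
  have := excess_append_length_add (l.drop r) (l.take r) s
  rw [List.length_drop, excess_drop, Nat.add_sub_cancel' hr, excess_take hs] at this
  rw [List.rotate_eq_drop_append_take hr, this]

lemma isForestCode_one_rotate_iff {l : List ℕ} (hl : l.sum + 1 = l.length) {r : ℕ}
    (hr : r < l.length) : IsForestCode 1 (l.rotate r) ↔
      (∀ t < r, excess l r < excess l t) ∧ ∀ t, r ≤ t → t < l.length → excess l r ≤ excess l t := by
  have hend : excess l l.length = -1 := by rw [excess_length]; omega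
  have hsum : (l.rotate r).sum + 1 = (l.rotate r).length := by
    rw [(l.rotate_perm r).sum_eq, List.length_rotate, hl]
  simp only [IsForestCode, List.length_rotate, hsum, true_and, Nat.cast_one]
  constructor
  · intro h
    refine ⟨fun t ht => ?_, fun t hrt ht => ?_⟩
    · have := h (l.length - r + t) (by omega)
      rw [excess_rotate_sub_add hr.le ht.le, hend] at this
      omega
    · have := h (t - r) (by omega)
      rw [excess_rotate_of_le hr.le (by omega), Nat.add_sub_cancel' hrt] at this
      omega
  · rintro ⟨hbefore, hafter⟩ t ht
    rcases lt_or_ge t (l.length - r) with h | h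
    · rw [excess_rotate_of_le hr.le h.le]
      have := hafter (r + t) (by omega) (by omega)
      omega
    · obtain ⟨s, rfl⟩ := Nat.exists_eq_add_of_le h
      rw [excess_rotate_sub_add hr.le (by omega), hend]
      have := hbefore s (by omega)
      omega

/-- The cycle lemma of Dvoretzky and Motzkin. -/
theorem existsUnique_isForestCode_one_rotate {l : List ℕ} (hl : l.sum + 1 = l.length) :
    ∃! r, r < l.length ∧ IsForestCode 1 (l.rotate r) := by
  classical
  obtain ⟨r₀, hr₀, hmin₀⟩ := (range l.length).exists_min_image (excess l)
    ⟨0, mem_range.2 (by omega)⟩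
  have hex : ∃ r, r < l.length ∧ ∀ t < l.length, excess l r ≤ excess l t :=
    ⟨r₀, mem_range.1 hr₀, fun t ht => hmin₀ t (mem_range.2 ht)⟩
  obtain ⟨hr, hmin⟩ := Nat.find_spec hex
  have hfirst : ∀ t < Nat.find hex, excess l (Nat.find hex) < excess l t := fun t ht => by
    obtain ⟨t', ht', hlt⟩ := not_forall₂.1 ((not_and.1 (Nat.find_min hex ht)) (by omega))
    exact (hmin t' ht').trans_lt (not_le.1 hlt)
  refine ⟨Nat.find hex, ⟨hr, (isForestCode_one_rotate_iff hl hr).2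
    ⟨hfirst, fun t _ ht => hmin t ht⟩⟩, fun r' ⟨hr', hgood⟩ => ?_⟩
  have h' := (isForestCode_one_rotate_iff hl hr').1 hgood
  rcases lt_trichotomy r' (Nat.find hex) with h | h | h
  · exact absurd (hfirst r' h) (not_lt.2 (h'.2 _ h.le hr))
  · exact h
  · exact absurd (h'.1 _ h) (not_lt.2 (hmin r' hr'))

noncomputable def forestWeight (α j n : ℕ) : ℝ :=
  ∑ l ∈ (words α n).filter (IsForestCode j), weight l

noncomputable abbrev treeWeight (α n : ℕ) : ℝ := forestWeight α 1 n

lemma forestWeight_nonneg (α j n : ℕ) : 0 ≤ forestWeight α j n :=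
  sum_nonneg fun l _ => weight_nonneg l

lemma words_zero (α : ℕ) : words α 0 = {[]} := by
  ext l
  simp only [mem_words, List.length_eq_zero_iff, mem_singleton]
  exact ⟨And.left, fun h => ⟨h, by simp [h]⟩⟩

lemma forestWeight_zero_right (α j : ℕ) : forestWeight α j 0 = if j = 0 then 1 else 0 := by
  rw [forestWeight, words_zero, filter_singleton]
  split_ifs with h₁ h₂ h₂ <;> simp_all [isForestCode_nil_iff]

lemma forestWeight_zero_left (α n : ℕ) : forestWeight α 0 n = if n = 0 then 1 else 0 := by
  simp only [forestWeight, sum_filter, isForestCode_zero_iff, sum_ite_eq', mem_words]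
  split_ifs <;> simp_all

lemma forestWeight_succ (α j n : ℕ) :
    forestWeight α (j + 1) n = ∑ p ∈ antidiagonal n, treeWeight α p.1 * forestWeight α j p.2 := by
  simp only [forestWeight, sum_mul_sum, ← sum_product']
  rw [sum_sigma']
  symm
  refine sum_bij (fun x _ => x.2.1 ++ x.2.2) ?_ ?_ ?_ ?_
  · rintro ⟨p, a, b⟩ hx
    simp only [mem_sigma, mem_product, mem_filter, HasAntidiagonal.mem_antidiagonal,
      mem_words] at hx ⊢
    obtain ⟨hp, ⟨⟨ha, ha'⟩, ha''⟩, ⟨hb, hb'⟩, hb''⟩ := hx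
    refine ⟨⟨by simp [ha, hb, hp], fun x hx => ?_⟩, isForestCode_append ha'' hb''⟩
    rcases List.mem_append.1 hx with hx | hx
    exacts [ha' x hx, hb' x hx]
  · rintro ⟨⟨p₁, p₂⟩, a, b⟩ hx ⟨⟨p₁', p₂'⟩, a', b'⟩ hx' h
    simp only [mem_sigma, mem_product, mem_filter, HasAntidiagonal.mem_antidiagonal,
      mem_words] at hx hx'
    obtain ⟨rfl, rfl⟩ := hx.2.1.2.append_inj hx'.2.1.2 h
    obtain ⟨-, ⟨⟨rfl, -⟩, -⟩, ⟨rfl, -⟩, -⟩ := hx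
    obtain ⟨-, ⟨⟨h₁, -⟩, -⟩, ⟨h₂, -⟩, -⟩ := hx'
    subst h₁ h₂
    rfl
  · intro l hl
    obtain ⟨hl, hcode⟩ := mem_filter.1 hl
    obtain ⟨a, b, ha, hb, rfl⟩ := hcode.exists_append
    refine ⟨⟨(a.length, b.length), a, b⟩, ?_, rfl⟩
    simp only [mem_words, List.length_append, List.mem_append] at hl
    simp only [mem_sigma, mem_product, mem_filter, HasAntidiagonal.mem_antidiagonal, mem_words,
      true_and]
    exact ⟨hl.1, ⟨fun x hx => hl.2 x (.inl hx), ha⟩, fun x hx => hl.2 x (.inr hx), hb⟩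
  · intro x _
    exact (weight_append _ _).symm

lemma treeWeight_succ (α n : ℕ) :
    treeWeight α (n + 1) = ∑ γ ∈ range α, (γ ! : ℝ)⁻¹ * forestWeight α γ n := by
  simp only [forestWeight, mul_sum]
  rw [sum_sigma']
  symm
  refine sum_bij (fun x _ => x.1 :: x.2) ?_ ?_ ?_ ?_
  · rintro ⟨γ, b⟩ hx
    simp only [mem_sigma, mem_range, mem_filter, mem_words] at hx ⊢
    refine ⟨⟨by simp [hx.2.1.1], fun x hx' => ?_⟩, isForestCode_one_cons_iff.2 hx.2.2⟩
    rcases List.mem_cons.1 hx' with rfl | hx'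
    exacts [hx.1, hx.2.1.2 x hx']
  · rintro ⟨γ, b⟩ - ⟨γ', b'⟩ - h
    obtain ⟨rfl, rfl⟩ := List.cons_eq_cons.1 h
    rfl
  · intro l hl
    obtain ⟨⟨hlen, hlt⟩, hcode⟩ := mem_filter.1 hl |>.imp_left mem_words.1
    obtain ⟨x, b, rfl⟩ := List.exists_cons_of_length_eq_add_one hlen
    refine ⟨⟨x, b⟩, ?_, rfl⟩
    simp only [mem_sigma, mem_range, mem_filter, mem_words]
    exact ⟨hlt x (.head b), ⟨by simpa using hlen, fun y hy => hlt y (.tail x hy)⟩,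
      isForestCode_one_cons_iff.1 hcode⟩
  · intro x _
    exact (weight_cons _ _).symm

lemma treeWeight_zero (α : ℕ) : treeWeight α 0 = 0 := by
  simp [forestWeight_zero_right]

lemma treeWeight_one {α : ℕ} (hα : α ≠ 0) : treeWeight α 1 = 1 := by
  rw [treeWeight_succ, sum_eq_single_of_mem 0 (mem_range.2 (Nat.pos_of_ne_zero hα))]
  · simp [forestWeight_zero_right]
  · intro γ _ hγ
    simp [forestWeight_zero_right, hγ]

lemma IsForestCode.rotate_inj {g g' : List ℕ} {r r' : ℕ} (hg : IsForestCode 1 g)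
    (hg' : IsForestCode 1 g') (hr : r < g.length) (hr' : r' < g'.length)
    (h : g.rotate r = g'.rotate r') : r = r' ∧ g = g' := by
  wlog hle : r ≤ r' generalizing g g' r r'
  · exact (this hg' hg hr' hr h.symm (by omega)).imp Eq.symm Eq.symm
  have hlen : g.length = g'.length := by rw [← List.length_rotate g r, h, List.length_rotate]
  have hrot : g.rotate (r + (g.length - r')) = g' := by
    rw [← List.rotate_rotate, h, List.rotate_rotate, hlen, Nat.add_sub_cancel' hr'.le,
      List.rotate_length]
  obtain rfl | hlt := hle.eq_or_lt
  · rw [Nat.add_sub_cancel' hr.le, List.rotate_length] at hrot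
    exact ⟨rfl, hrot⟩
  have := (existsUnique_isForestCode_one_rotate hg.1).unique
    ⟨(by omega : 0 < g.length), by rwa [List.rotate_zero]⟩ ⟨(by omega), hrot ▸ hg'⟩
  omega

lemma sum_weight_filter_eq_mul_treeWeight (α m : ℕ) :
    ∑ l ∈ (words α m).filter (fun l => l.sum + 1 = m), weight l = m * treeWeight α m := by
  have hrhs : (m : ℝ) * treeWeight α m =
      ∑ x ∈ range m ×ˢ (words α m).filter (IsForestCode 1), weight x.2 := by
    simp only [sum_product, sum_const, card_range, nsmul_eq_mul, forestWeight]
  rw [hrhs]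
  symm
  refine sum_bij (fun x _ => x.2.rotate x.1) ?_ ?_ ?_ ?_
  · rintro ⟨r, g⟩ hx
    simp only [mem_product, mem_range, mem_filter, mem_words] at hx ⊢
    obtain ⟨-, ⟨hlen, hlt⟩, hg⟩ := hx
    refine ⟨⟨by rw [List.length_rotate, hlen], fun x hx => hlt x ((g.rotate_perm r).mem_iff.1 hx)⟩,
      ?_⟩
    rw [(g.rotate_perm r).sum_eq, ← hlen, hg.1]
  · rintro ⟨r, g⟩ hx ⟨r', g'⟩ hx' h
    simp only [mem_product, mem_range, mem_filter, mem_words] at hx hx'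
    obtain ⟨rfl, rfl⟩ := hx.2.2.rotate_inj hx'.2.2 (by omega) (by omega) h
    rfl
  · intro l hl
    obtain ⟨⟨hlen, hlt⟩, hsum⟩ := mem_filter.1 hl |>.imp_left mem_words.1
    obtain ⟨s, ⟨hs, hcode⟩, -⟩ := existsUnique_isForestCode_one_rotate (hlen ▸ hsum)
    have hmem : l.rotate s ∈ (words α m).filter (IsForestCode 1) :=
      mem_filter.2 ⟨mem_words.2 ⟨by rw [List.length_rotate, hlen],
        fun x hx => hlt x ((l.rotate_perm s).mem_iff.1 hx)⟩, hcode⟩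
    obtain rfl | hs₀ := Nat.eq_zero_or_pos s
    · exact ⟨(0, l), mem_product.2 ⟨mem_range.2 (by omega), by simpa using hmem⟩, by simp⟩
    · refine ⟨(m - s, l.rotate s), mem_product.2 ⟨mem_range.2 (by omega), hmem⟩, ?_⟩
      simp only [List.rotate_rotate]
      rw [Nat.add_sub_cancel' (by omega), ← hlen, List.rotate_length]
  · rintro ⟨r, g⟩ -
    exact (weight_eq_of_perm (g.rotate_perm r)).symm

lemma rootedTrees_eq_treeWeight (α k : ℕ) : rootedTrees α (k + 2) = treeWeight α (k + 1) := by
  have hsum : ∑ f ∈ (Fintype.piFinset fun _ : Fin (k + 1) => range α) |>.filter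
        (fun f => ∑ i, f i = k), ∏ i, (1 : ℝ) / ((f i)! : ℝ) =
      ∑ l ∈ (words α (k + 1)).filter (fun l => l.sum + 1 = k + 1), weight l := by
    rw [words, filter_image, sum_image List.ofFn_injective.injOn]
    refine sum_congr (filter_congr fun f _ => ?_) fun f _ => ?_
    · simp only [List.sum_ofFn, add_left_inj]
    · simp only [weight, List.map_ofFn, List.prod_ofFn, Function.comp_def, one_div]
  rw [rootedTrees, show k + 2 - 1 = k + 1 from rfl, show k + 2 - 2 = k from rfl, hsum,
    sum_weight_filter_eq_mul_treeWeight]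
  push_cast
  rw [show (k : ℝ) + 2 - 1 = k + 1 by ring, one_div, inv_mul_cancel_left₀ (by positivity)]

end LukasiewiczCodes

section Series

variable {α : ℕ} {β : ℝ}

lemma sum_range_sum_antidiagonal_le {u v : ℕ → ℝ} (hu : ∀ n, 0 ≤ u n) (hv : ∀ n, 0 ≤ v n)
    (N : ℕ) : ∑ n ∈ range N, ∑ p ∈ antidiagonal n, u p.1 * v p.2 ≤
      (∑ n ∈ range N, u n) * ∑ n ∈ range N, v n := by
  have hdisj : (range N : Set ℕ).PairwiseDisjoint antidiagonal := fun m _ m' _ hne =>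
    disjoint_left.2 fun p hp hp' => hne <|
      (HasAntidiagonal.mem_antidiagonal.1 hp).symm.trans (HasAntidiagonal.mem_antidiagonal.1 hp')
  rw [← sum_biUnion hdisj, sum_mul_sum, ← sum_product']
  refine sum_le_sum_of_subset_of_nonneg (fun p hp => ?_) fun p _ _ => mul_nonneg (hu _) (hv _)
  obtain ⟨n, hn, hp⟩ := mem_biUnion.1 hp
  have := HasAntidiagonal.mem_antidiagonal.1 hp
  simp only [mem_product, mem_range] at hn ⊢
  omega

lemma hasSum_sum_mul_antidiagonal {f g : ℕ → ℝ} {a b : ℝ} (hf : HasSum f a) (hg : HasSum g b) :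
    HasSum (fun n => ∑ p ∈ antidiagonal n, f p.1 * g p.2) (a * b) := by
  have hf' := summable_norm_iff.2 hf.summable
  have hg' := summable_norm_iff.2 hg.summable
  rw [← hf.tsum_eq, ← hg.tsum_eq, tsum_mul_tsum_eq_tsum_sum_antidiagonal_of_summable_norm hf' hg']
  exact (summable_norm_sum_mul_antidiagonal_of_summable_norm hf' hg').of_norm.hasSum

lemma forestWeight_succ_mul_pow (γ n : ℕ) : forestWeight α (γ + 1) n * β ^ n =
    ∑ p ∈ antidiagonal n, (treeWeight α p.1 * β ^ p.1) * (forestWeight α γ p.2 * β ^ p.2) := by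
  rw [forestWeight_succ, sum_mul]
  refine sum_congr rfl fun p hp => ?_
  rw [← HasAntidiagonal.mem_antidiagonal.1 hp, pow_add]
  ring

lemma sum_range_forestWeight_le (hβ : 0 ≤ β) (γ N : ℕ) :
    ∑ m ∈ range N, forestWeight α γ m * β ^ m ≤ (∑ m ∈ range N, treeWeight α m * β ^ m) ^ γ := by
  have hnonneg : ∀ j m, 0 ≤ forestWeight α j m * β ^ m := fun j m => by
    have := forestWeight_nonneg α j m; positivity
  induction γ with
  | zero =>
    simp only [forestWeight_zero_left, ite_mul, one_mul, zero_mul, sum_ite_eq', mem_range, pow_zero]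
    split_ifs <;> simp
  | succ γ ih =>
    rw [sum_congr rfl fun m _ => forestWeight_succ_mul_pow γ m]
    calc _ ≤ (∑ m ∈ range N, treeWeight α m * β ^ m) * ∑ m ∈ range N, forestWeight α γ m * β ^ m :=
          sum_range_sum_antidiagonal_le (hnonneg 1) (hnonneg γ) N
      _ ≤ (∑ m ∈ range N, treeWeight α m * β ^ m) ^ (γ + 1) := by
          rw [pow_succ']
          gcongr
          exact sum_nonneg fun m _ => hnonneg 1 m

lemma mul_truncExp (β R : ℝ) :
    β * truncExp α R = ∑ γ ∈ range α, β * (γ ! : ℝ)⁻¹ * R ^ γ := by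
  rw [truncExp, mul_sum]
  exact sum_congr rfl fun γ _ => by ring

lemma treeWeight_succ_mul_pow (m : ℕ) : treeWeight α (m + 1) * β ^ (m + 1) =
    ∑ γ ∈ range α, β * (γ ! : ℝ)⁻¹ * (forestWeight α γ m * β ^ m) := by
  rw [treeWeight_succ, sum_mul]
  exact sum_congr rfl fun γ _ => by ring

lemma sum_range_treeWeight_le (hβ : 0 ≤ β) {x : ℝ} (hx : 0 ≤ x) (hsup : β * truncExp α x ≤ x)
    (N : ℕ) : ∑ m ∈ range N, treeWeight α m * β ^ m ≤ x := by
  induction N with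
  | zero => simpa using hx
  | succ N ih =>
    have hS : 0 ≤ ∑ m ∈ range N, treeWeight α m * β ^ m :=
      sum_nonneg fun m _ => by have := forestWeight_nonneg α 1 m; positivity
    rw [sum_range_succ', treeWeight_zero, zero_mul, add_zero]
    simp only [treeWeight_succ_mul_pow]
    rw [sum_comm]
    calc _ ≤ ∑ γ ∈ range α, β * (γ ! : ℝ)⁻¹ * x ^ γ := by
          refine sum_le_sum fun γ _ => ?_
          rw [← mul_sum]
          gcongr
          exact (sum_range_forestWeight_le hβ γ N).trans (by gcongr)
      _ ≤ x := by rwa [← mul_truncExp]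

lemma hasSum_forestWeight {T : ℝ} (hT : HasSum (fun m => treeWeight α m * β ^ m) T) (γ : ℕ) :
    HasSum (fun m => forestWeight α γ m * β ^ m) (T ^ γ) := by
  induction γ with
  | zero =>
    simp only [forestWeight_zero_left, ite_mul, one_mul, zero_mul, pow_zero]
    convert hasSum_ite_eq 0 (1 : ℝ) using 2 with m
    split_ifs <;> simp_all
  | succ γ ih =>
    rw [pow_succ']
    exact (hasSum_sum_mul_antidiagonal hT ih).congr_fun fun m => forestWeight_succ_mul_pow γ m

lemma eq_mul_truncExp_of_hasSum {T : ℝ} (hT : HasSum (fun m => treeWeight α m * β ^ m) T) :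
    T = β * truncExp α T := by
  have hshift : HasSum (fun m => treeWeight α (m + 1) * β ^ (m + 1)) (β * truncExp α T) := by
    simp only [treeWeight_succ_mul_pow, mul_truncExp]
    exact hasSum_sum fun γ _ => (hasSum_forestWeight hT γ).mul_left _
  have := (hasSum_nat_add_iff' 1).2 hT
  simp only [sum_range_one, pow_zero, treeWeight_zero, zero_mul, sub_zero] at this
  exact this.unique hshift

theorem exists_hasSum_treeWeight (hα : α ≠ 0) (hβ : 0 < β) {x : ℝ} (hx : 0 ≤ x)
    (hsup : β * truncExp α x ≤ x) : ∃ T, HasSum (fun k => treeWeight α (k + 1) * β ^ (k + 1)) T ∧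
      β ≤ T ∧ T ≤ x ∧ T = β * truncExp α T := by
  have hnonneg : ∀ m, 0 ≤ treeWeight α m * β ^ m := fun m => by
    have := forestWeight_nonneg α 1 m; positivity
  have hbound := sum_range_treeWeight_le hβ.le hx hsup
  have hT := (summable_of_sum_range_le hnonneg hbound).hasSum
  refine ⟨_, by simpa [treeWeight_zero] using (hasSum_nat_add_iff' 1).2 hT, ?_,
    Real.tsum_le_of_sum_range_le hnonneg hbound, eq_mul_truncExp_of_hasSum hT⟩
  simpa [treeWeight_one hα] using hT.summable.le_tsum 1 fun m _ => hnonneg m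

end Series

end BranchedPolymer

open BranchedPolymer in
theorem branched_polymer_subcritical_general (α : ℕ) (hα : 3 ≤ α) (Rc : ℝ) (hRc : 0 < Rc)
    (huniq : ∀ R : ℝ, 0 < R →
        (R - 1) * truncExp α R = R ^ α / (Nat.factorial (α - 1)) → R = Rc)
    (β : ℝ) (hβ0 : 0 < β) (hβc : β < Rc / truncExp α Rc) :
    Summable (fun k : ℕ => rootedTrees α (k + 2) * β ^ (k + 1)) ∧
    0 < ∑' k : ℕ, rootedTrees α (k + 2) * β ^ (k + 1) ∧
    (∑' k : ℕ, rootedTrees α (k + 2) * β ^ (k + 1)) < Rc ∧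
    (∑' k : ℕ, rootedTrees α (k + 2) * β ^ (k + 1))
      = β * truncExp α (∑' k : ℕ, rootedTrees α (k + 2) * β ^ (k + 1)) ∧
    (∀ y : ℝ, 0 < y → y < Rc → y = β * truncExp α y →
      y = ∑' k : ℕ, rootedTrees α (k + 2) * β ^ (k + 1)) := by
  obtain ⟨α, rfl⟩ : ∃ a, α = a + 1 := ⟨α - 1, by omega⟩
  simp only [Nat.add_sub_cancel] at huniq
  obtain ⟨x, hx, hxfix⟩ := exists_eq_mul_truncExp hRc.le hβ0 hβc
  obtain ⟨T, hT, hβT, hTx, hTfix⟩ :=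
    exists_hasSum_treeWeight α.succ_ne_zero hβ0 hx.1.le hxfix.symm.le
  simp only [rootedTrees_eq_treeWeight, hT.tsum_eq]
  have hTRc : T < Rc := hTx.trans_lt hx.2
  refine ⟨hT.summable, hβ0.trans_le hβT, hTRc, hTfix, fun y hy₀ hyRc hy => ?_⟩
  exact eq_of_eq_mul_truncExp huniq ⟨hy₀.le, hyRc.le⟩ ⟨by linarith, hTRc.le⟩ hy hTfix

/-- **Subcritical behaviour of the rooted branched-polymer partition function.**
Let `α ≥ 3`, `R_c` the unique positive solution of
`(R − 1)·g_α(R) = R^α/(α−1)!`, and `β_c = R_c/g_α(R_c)`.  Then for every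
`0 < β < β_c` the series `R(β) = Σ_{n≥2} r_α(n)·β^{n−1}` converges, its sum `S`
satisfies `0 < S < R_c`, and `S` is the unique solution in `(0, R_c)` of the
equation `S = β·g_α(S)`. -/
theorem branched_polymer_subcritical (α : ℕ) (hα : 3 ≤ α) (Rc : ℝ) (hRc : 0 < Rc)
    (heq : (Rc - 1) * truncExp α Rc = Rc ^ α / (Nat.factorial (α - 1)))
    (huniq : ∀ R : ℝ, 0 < R →
        (R - 1) * truncExp α R = R ^ α / (Nat.factorial (α - 1)) → R = Rc)
    (β : ℝ) (hβ0 : 0 < β) (hβc : β < Rc / truncExp α Rc) :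
    Summable (fun k : ℕ => rootedTrees α (k + 2) * β ^ (k + 1)) ∧
    0 < ∑' k : ℕ, rootedTrees α (k + 2) * β ^ (k + 1) ∧
    (∑' k : ℕ, rootedTrees α (k + 2) * β ^ (k + 1)) < Rc ∧
    (∑' k : ℕ, rootedTrees α (k + 2) * β ^ (k + 1))
      = β * truncExp α (∑' k : ℕ, rootedTrees α (k + 2) * β ^ (k + 1)) ∧
    (∀ y : ℝ, 0 < y → y < Rc → y = β * truncExp α y →
      y = ∑' k : ℕ, rootedTrees α (k + 2) * β ^ (k + 1)) :=
  branched_polymer_subcritical_general α hα Rc hRc huniq β hβ0 hβc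
end
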